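/- arXiv:2311.02507 — 9 statements merged into one kernel-verified Lean document; each statement's English description precedes it below -/
import Mathlib

section
/- Let μ ≥ 1 and d ≥ 1 be integers, α ∈ ℝ\{0}, β ∈ ℂ with Re β > 0, and r, l ∈ ℂ^d. For n ∈ ℕ\{0}, j0 ∈ ℕ and j ∈ ℤ define the d×d matrix S(n,j0,j) := 1_{j ≥ 0} · 1_{(j−j0)/α ∈ [n/2, 2n]} · n^{−1/(2μ)} H_{2μ}(β; (nα + j0 − j)/n^{1/(2μ)}) · r l^T. Then for every pair of exponents 1 ≤ r1 ≤ r2 ≤ ∞ there exists a constant C > 0 such that for all n ∈ ℕ\{0} and all h ∈ ℓ^{r1}(ℤ, ℂ^d), the sequence ( Σ_{j0 ∈ ℕ} S(n,j0,j) h_{j0} )_{j ∈ ℤ} is well defined (for each j only finitely many terms are nonzero), belongs to ℓ^{r2}(ℤ, ℂ^d), and has ℓ^{r2} norm at most C n^{−(1/(2μ))(1/r1 − 1/r2)} ‖h‖_{ℓ^{r1}}. -/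
/-!
`H_{2μ}(β; ·)` is a rescaled Fourier transform of `u ↦ exp (-β u^{2μ})`, a function whose first
two derivatives are integrable, so `|H_{2μ}(β; x)| ≲ (1 + x²)⁻¹`. With `λ = n^{1/(2μ)}`, every entry
of `S(n, j₀, j)` is therefore bounded by a multiple of the Cauchy kernel
`λ⁻¹ (1 + ((nα + j₀ - j) / λ)²)⁻¹`. Its entries are at most `λ⁻¹`, and its row and column sums are
bounded uniformly in `n`: grouping the lattice points `m` by `⌊|m - a| / λ⌋` shows
`∑ₘ (1 + ((m - a) / λ)²)⁻¹ ≲ λ`.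

For a kernel with row and column sums `≤ A` and entries `≤ A c`, weighted Hölder gives the
pointwise bound `A c^{1/r₁} ‖h‖_{r₁}` and the Schur test the `ℓ^{r₁}` bound `A ‖h‖_{r₁}`;
interpolating with `∑ |xᵢ|^{r₂} ≤ ‖x‖_∞^{r₂ - r₁} ∑ |xᵢ|^{r₁}` gives `A c^{1/r₁ - 1/r₂} ‖h‖_{r₁}`
in `ℓ^{r₂}`. The indicator forces `j₀ ≤ j + 2n|α|`, so every sum over `j₀` is finite.
-/

open MeasureTheory
open scoped ENNReal Classical

/-- The generalized Gaussian `H_{2μ}(β;x) := (1/(2π)) ∫_ℝ e^{ixu} e^{−β u^{2μ}} du`. -/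
noncomputable def Hgauss (μ : ℕ) (β : ℂ) (x : ℝ) : ℂ :=
  (1 / (2 * Real.pi)) •
    ∫ u : ℝ, Complex.exp ((x : ℂ) * (u : ℂ) * Complex.I - β * (u : ℂ) ^ (2 * μ))

open Finset Real FourierTransform

section SchurTest

lemma rpow_inner_le_weight_mul_Lp_of_nonneg {ι : Type*} (s : Finset ι) {w f : ι → ℝ}
    (hw : ∀ i, 0 ≤ w i) (hf : ∀ i, 0 ≤ f i) {r : ℝ} (hr : 1 ≤ r) :
    (∑ i ∈ s, w i * f i) ^ r ≤ (∑ i ∈ s, w i) ^ (r - 1) * ∑ i ∈ s, w i * f i ^ r := by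
  have hr0 : 0 < r := by linarith
  have hW : 0 ≤ ∑ i ∈ s, w i := sum_nonneg fun i _ => hw i
  have hWf : 0 ≤ ∑ i ∈ s, w i * f i ^ r :=
    sum_nonneg fun i _ => mul_nonneg (hw i) (rpow_nonneg (hf i) r)
  calc (∑ i ∈ s, w i * f i) ^ r
      ≤ ((∑ i ∈ s, w i) ^ (1 - r⁻¹) * (∑ i ∈ s, w i * f i ^ r) ^ r⁻¹) ^ r :=
        rpow_le_rpow (sum_nonneg fun i _ => mul_nonneg (hw i) (hf i))
          (inner_le_weight_mul_Lp_of_nonneg s hr w f hw hf) hr0.le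
    _ = (∑ i ∈ s, w i) ^ (r - 1) * ∑ i ∈ s, w i * f i ^ r := by
        rw [mul_rpow (by positivity) (by positivity), ← rpow_mul hW, ← rpow_mul hWf,
          inv_mul_cancel₀ hr0.ne', rpow_one, sub_mul, one_mul, inv_mul_cancel₀ hr0.ne']

lemma sum_rpow_le_of_le_of_sum_rpow_le {ι : Type*} (t : Finset ι) {x : ι → ℝ} {M N r r' : ℝ}
    (hx : ∀ i, 0 ≤ x i) (hM : 0 ≤ M) (hxM : ∀ i, x i ≤ M) (hN : ∑ i ∈ t, x i ^ r ≤ N) (hr : 0 < r)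
    (hrr' : r ≤ r') :
    ∑ i ∈ t, x i ^ r' ≤ M ^ (r' - r) * N := by
  have hsplit : ∀ i, x i ^ r' = x i ^ (r' - r) * x i ^ r := fun i => by
    rw [← rpow_add' (hx i) (by linarith), sub_add_cancel]
  calc ∑ i ∈ t, x i ^ r' ≤ ∑ i ∈ t, M ^ (r' - r) * x i ^ r := by
        refine sum_le_sum fun i _ => ?_
        rw [hsplit]
        exact mul_le_mul_of_nonneg_right (rpow_le_rpow (hx i) (hxM i) (by linarith))
          (rpow_nonneg (hx i) r)
    _ ≤ M ^ (r' - r) * N := by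
        rw [← mul_sum]
        exact mul_le_mul_of_nonneg_left hN (rpow_nonneg hM _)

lemma rpow_sub_one_mul_self {x : ℝ} (hx : 0 ≤ x) {r : ℝ} (hr : r ≠ 0) :
    x ^ (r - 1) * x = x ^ r := by
  rw [← rpow_add_one' hx (by simpa using hr), sub_add_cancel]

lemma one_le_toReal_of_ne_top {p : ℝ≥0∞} [Fact (1 ≤ p)] (hp : p ≠ ⊤) : 1 ≤ p.toReal := by
  simpa using ENNReal.toReal_mono hp (Fact.out : 1 ≤ p)

variable {ι κ E F : Type*} [NormedAddCommGroup E] [NormedAddCommGroup F]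
  {p : ℝ≥0∞} [Fact (1 ≤ p)] {K : ι → κ → ℝ} {s : ι → Finset κ} {A c : ℝ}
  {h : lp (fun _ : κ => E) p} {G : ι → F}

lemma norm_rpow_le_of_le_kernel_sum (hp : p ≠ ⊤) (hK : ∀ i k, 0 ≤ K i k)
    (hrow : ∀ i, ∑ k ∈ s i, K i k ≤ A) (hG : ∀ i, ‖G i‖ ≤ ∑ k ∈ s i, K i k * ‖h k‖) (i : ι) :
    ‖G i‖ ^ p.toReal ≤ A ^ (p.toReal - 1) * ∑ k ∈ s i, K i k * ‖h k‖ ^ p.toReal := by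
  have hr := one_le_toReal_of_ne_top hp
  calc ‖G i‖ ^ p.toReal ≤ (∑ k ∈ s i, K i k * ‖h k‖) ^ p.toReal :=
        rpow_le_rpow (norm_nonneg _) (hG i) (by linarith)
    _ ≤ (∑ k ∈ s i, K i k) ^ (p.toReal - 1) * ∑ k ∈ s i, K i k * ‖h k‖ ^ p.toReal :=
        rpow_inner_le_weight_mul_Lp_of_nonneg _ (hK i) (fun k => norm_nonneg _) hr
    _ ≤ A ^ (p.toReal - 1) * ∑ k ∈ s i, K i k * ‖h k‖ ^ p.toReal := by
        refine mul_le_mul_of_nonneg_right ?_ (sum_nonneg fun k _ => ?_)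
        · exact rpow_le_rpow (sum_nonneg fun k _ => hK i k) (hrow i) (by linarith)
        · exact mul_nonneg (hK i k) (by positivity)

lemma norm_le_of_le_kernel_sum (hA : 0 ≤ A) (hc : 0 ≤ c) (hK : ∀ i k, 0 ≤ K i k)
    (hrow : ∀ i, ∑ k ∈ s i, K i k ≤ A) (hsup : ∀ i k, K i k ≤ A * c)
    (hG : ∀ i, ‖G i‖ ≤ ∑ k ∈ s i, K i k * ‖h k‖) (i : ι) :
    ‖G i‖ ≤ A * c ^ (1 / p).toReal * ‖h‖ := by
  have hp0 : p ≠ 0 := (zero_lt_one.trans_le Fact.out).ne'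
  rcases eq_or_ne p ⊤ with rfl | hp
  · calc ‖G i‖ ≤ ∑ k ∈ s i, K i k * ‖h‖ :=
          (hG i).trans <| sum_le_sum fun k _ =>
            mul_le_mul_of_nonneg_left (lp.norm_apply_le_norm hp0 h k) (hK i k)
      _ ≤ A * c ^ (1 / ⊤ : ℝ≥0∞).toReal * ‖h‖ := by
          rw [← sum_mul]; simpa using mul_le_mul_of_nonneg_right (hrow i) (norm_nonneg h)
  have hr := one_le_toReal_of_ne_top hp
  set r := p.toReal
  have hpow : ‖G i‖ ^ r ≤ (A * c ^ (1 / p).toReal * ‖h‖) ^ r := calc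
    ‖G i‖ ^ r ≤ A ^ (r - 1) * ∑ k ∈ s i, K i k * ‖h k‖ ^ r :=
        norm_rpow_le_of_le_kernel_sum hp hK hrow hG i
    _ ≤ A ^ (r - 1) * ((A * c) * ‖h‖ ^ r) := by
        refine mul_le_mul_of_nonneg_left ?_ (rpow_nonneg hA _)
        calc ∑ k ∈ s i, K i k * ‖h k‖ ^ r ≤ ∑ k ∈ s i, A * c * ‖h k‖ ^ r :=
              sum_le_sum fun k _ => mul_le_mul_of_nonneg_right (hsup i k) (by positivity)
          _ ≤ A * c * ‖h‖ ^ r := by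
              rw [← mul_sum]
              exact mul_le_mul_of_nonneg_left (lp.sum_rpow_le_norm_rpow (by linarith) h _)
                (mul_nonneg hA hc)
    _ = (A * c ^ (1 / p).toReal * ‖h‖) ^ r := by
        rw [mul_rpow (by positivity) (norm_nonneg _), mul_rpow hA (by positivity),
          ← rpow_mul hc, ENNReal.toReal_div, ENNReal.toReal_one, one_div_mul_cancel (by linarith),
          rpow_one, ← rpow_sub_one_mul_self hA (r := r) (by linarith)]
        ring
  exact (rpow_le_rpow_iff (norm_nonneg _) (by positivity) (by linarith)).1 hpow

lemma sum_norm_rpow_le_of_le_kernel_sum (hp : p ≠ ⊤) (hA : 0 ≤ A) (hK : ∀ i k, 0 ≤ K i k)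
    (hrow : ∀ i, ∑ k ∈ s i, K i k ≤ A) (hcol : ∀ k (t : Finset ι), ∑ i ∈ t, K i k ≤ A)
    (hG : ∀ i, ‖G i‖ ≤ ∑ k ∈ s i, K i k * ‖h k‖) (t : Finset ι) :
    ∑ i ∈ t, ‖G i‖ ^ p.toReal ≤ (A * ‖h‖) ^ p.toReal := by
  have hr := one_le_toReal_of_ne_top hp
  set r := p.toReal
  set U := t.biUnion s
  have hterm : ∀ i k, 0 ≤ K i k * ‖h k‖ ^ r := fun i k => mul_nonneg (hK i k) (by positivity)
  calc ∑ i ∈ t, ‖G i‖ ^ r ≤ ∑ i ∈ t, A ^ (r - 1) * ∑ k ∈ U, K i k * ‖h k‖ ^ r :=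
        sum_le_sum fun i hi => (norm_rpow_le_of_le_kernel_sum hp hK hrow hG i).trans <|
          mul_le_mul_of_nonneg_left
            (sum_le_sum_of_subset_of_nonneg (subset_biUnion_of_mem s hi) fun k _ _ => hterm i k)
            (rpow_nonneg hA _)
    _ = A ^ (r - 1) * ∑ k ∈ U, (∑ i ∈ t, K i k) * ‖h k‖ ^ r := by
        rw [← mul_sum, sum_comm]
        simp only [sum_mul]
    _ ≤ A ^ (r - 1) * (A * ‖h‖ ^ r) := by
        refine mul_le_mul_of_nonneg_left ?_ (rpow_nonneg hA _)
        calc ∑ k ∈ U, (∑ i ∈ t, K i k) * ‖h k‖ ^ r ≤ ∑ k ∈ U, A * ‖h k‖ ^ r :=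
              sum_le_sum fun k _ => mul_le_mul_of_nonneg_right (hcol k t) (by positivity)
          _ ≤ A * ‖h‖ ^ r := by
              rw [← mul_sum]
              exact mul_le_mul_of_nonneg_left (lp.sum_rpow_le_norm_rpow (by linarith) h _) hA
    _ = (A * ‖h‖) ^ r := by
        rw [mul_rpow hA (norm_nonneg _), ← mul_assoc, rpow_sub_one_mul_self hA (by linarith)]

theorem exists_lp_of_norm_le_kernel_sum {q : ℝ≥0∞} [Fact (1 ≤ q)] (hpq : p ≤ q) (hA : 0 ≤ A)
    (hc : 0 ≤ c) (hK : ∀ i k, 0 ≤ K i k) (hrow : ∀ i, ∑ k ∈ s i, K i k ≤ A)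
    (hcol : ∀ k (t : Finset ι), ∑ i ∈ t, K i k ≤ A) (hsup : ∀ i k, K i k ≤ A * c)
    (hG : ∀ i, ‖G i‖ ≤ ∑ k ∈ s i, K i k * ‖h k‖) :
    ∃ g : lp (fun _ : ι => F) q, (∀ i, g i = G i) ∧
      ‖g‖ ≤ A * c ^ ((1 / p).toReal - (1 / q).toReal) * ‖h‖ := by
  have hpt := norm_le_of_le_kernel_sum hA hc hK hrow hsup hG
  have hbound : 0 ≤ A * c ^ (1 / p).toReal * ‖h‖ := by positivity
  rcases eq_or_ne q ⊤ with rfl | hq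
  · refine ⟨⟨G, memℓp_infty ⟨_, Set.forall_mem_range.2 hpt⟩⟩, fun i => rfl, ?_⟩
    simpa using lp.norm_le_of_forall_le hbound hpt
  have hp : p ≠ ⊤ := ne_top_of_le_ne_top hq hpq
  have hr := one_le_toReal_of_ne_top hp
  have hrq : p.toReal ≤ q.toReal := ENNReal.toReal_mono hq hpq
  have hsum : ∀ t : Finset ι, ∑ i ∈ t, ‖G i‖ ^ q.toReal
      ≤ (A * c ^ ((1 / p).toReal - (1 / q).toReal) * ‖h‖) ^ q.toReal := fun t => by
    refine (sum_rpow_le_of_le_of_sum_rpow_le t (fun i => norm_nonneg _) hbound hpt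
      (sum_norm_rpow_le_of_le_kernel_sum hp hA hK hrow hcol hG t) (by linarith) hrq).trans_eq ?_
    have hr0 : p.toReal ≠ 0 := by linarith
    have hr0' : q.toReal ≠ 0 := by linarith
    have hX : 0 ≤ A * ‖h‖ := mul_nonneg hA (norm_nonneg _)
    simp only [ENNReal.toReal_div, ENNReal.toReal_one, mul_right_comm A _ ‖h‖]
    rw [mul_rpow hX (by positivity), mul_rpow hX (by positivity), mul_right_comm,
      ← rpow_add' hX (by linarith), sub_add_cancel, ← rpow_mul hc, ← rpow_mul hc]
    congr 2
    field_simp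
  refine ⟨⟨G, memℓp_gen' hsum⟩, fun i => rfl, ?_⟩
  exact lp.norm_le_of_forall_sum_le (by linarith) (by positivity) hsum

end SchurTest

section FourierDecay

variable {E : Type*} [NormedAddCommGroup E] [NormedSpace ℂ E]

theorem mul_norm_fourier_le_of_hasDerivAt {f f' f'' : ℝ → E}
    (hf : ∀ x, HasDerivAt f (f' x) x) (hf' : ∀ x, HasDerivAt f' (f'' x) x)
    (hfi : Integrable f) (hf'i : Integrable f') (hf''i : Integrable f'') (w : ℝ) :
    (1 + (2 * π * w) ^ 2) * ‖𝓕 f w‖ ≤ (∫ x, ‖f x‖) + ∫ x, ‖f'' x‖ := by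
  have hd : deriv f = f' := funext fun x => (hf x).deriv
  have hd' : deriv f' = f'' := funext fun x => (hf' x).deriv
  have h2 : 𝓕 f'' w = (2 * π * Complex.I * w) • (2 * π * Complex.I * w) • 𝓕 f w := by
    rw [← hd', Real.fourier_deriv hf'i (fun x => (hf' x).differentiableAt) (hd' ▸ hf''i),
      ← hd, Real.fourier_deriv hfi (fun x => (hf x).differentiableAt) (hd ▸ hf'i)]
  have hnorm : ‖𝓕 f'' w‖ = (2 * π * w) ^ 2 * ‖𝓕 f w‖ := by
    rw [h2, norm_smul, norm_smul, ← mul_assoc, ← sq]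
    congr 1
    simp [abs_of_pos pi_pos, mul_pow]
  have hle : ∀ g : ℝ → E, ‖𝓕 g w‖ ≤ ∫ x, ‖g x‖ := fun g =>
    VectorFourier.norm_fourierIntegral_le_integral_norm _ _ _ g w
  linarith [hle f, hnorm ▸ hle f'']

end FourierDecay

section GeneralizedGaussian

variable {μ : ℕ} {β : ℂ}

noncomputable def expNegPow (μ : ℕ) (β : ℂ) (u : ℝ) : ℂ := Complex.exp (-(β * (u : ℂ) ^ (2 * μ)))

lemma norm_expNegPow (u : ℝ) : ‖expNegPow μ β u‖ = rexp (-(β.re * u ^ (2 * μ))) := by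
  rw [expNegPow, Complex.norm_exp, ← Complex.ofReal_pow, Complex.neg_re, Complex.re_mul_ofReal]

lemma sq_sub_one_le_pow_two_mul (hμ : 1 ≤ μ) (u : ℝ) : u ^ 2 - 1 ≤ u ^ (2 * μ) := by
  rw [pow_mul]
  rcases le_or_gt (u ^ 2) 1 with h | h
  · nlinarith [pow_nonneg (sq_nonneg u) μ]
  · linarith [le_self_pow₀ h.le (by omega : μ ≠ 0)]

lemma integrable_pow_mul_expNegPow (hμ : 1 ≤ μ) (hβ : 0 < β.re) (k : ℕ) :
    Integrable fun u : ℝ => (u : ℂ) ^ k * expNegPow μ β u := by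
  have hgauss : Integrable fun u : ℝ => u ^ (k : ℝ) * rexp (-β.re * u ^ 2) :=
    integrable_rpow_mul_exp_neg_mul_sq hβ (by linarith [(Nat.cast_nonneg k : (0 : ℝ) ≤ k)])
  refine (hgauss.norm.const_mul (rexp β.re)).mono' (by unfold expNegPow; fun_prop)
    (ae_of_all _ fun u => ?_)
  rw [norm_mul, norm_expNegPow, norm_mul, norm_pow, Complex.norm_real, rpow_natCast, norm_pow,
    Real.norm_eq_abs, Real.norm_of_nonneg (exp_pos _).le, mul_left_comm, ← exp_add]
  refine mul_le_mul_of_nonneg_left (exp_le_exp.2 ?_) (by positivity)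
  nlinarith [sq_sub_one_le_pow_two_mul hμ u]

lemma hasDerivAt_expNegPow (u : ℝ) :
    HasDerivAt (expNegPow μ β) (-(2 * μ * β) * ((u : ℂ) ^ (2 * μ - 1) * expNegPow μ β u)) u := by
  have h : HasDerivAt (fun z : ℂ => Complex.exp (-(β * z ^ (2 * μ))))
      (Complex.exp (-(β * (u : ℂ) ^ (2 * μ))) * -(β * ((2 * μ : ℕ) * (u : ℂ) ^ (2 * μ - 1))))
      (u : ℂ) :=
    ((hasDerivAt_pow _ _).const_mul β).neg.cexp
  refine h.comp_ofReal.congr_deriv ?_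
  simp only [expNegPow]
  push_cast
  ring

lemma hasDerivAt_pow_mul_expNegPow (k : ℕ) (u : ℝ) :
    HasDerivAt (fun u : ℝ => (u : ℂ) ^ k * expNegPow μ β u)
      (k * ((u : ℂ) ^ (k - 1) * expNegPow μ β u) +
        -(2 * μ * β) * ((u : ℂ) ^ (k + (2 * μ - 1)) * expNegPow μ β u)) u := by
  refine (((hasDerivAt_pow k (u : ℂ)).comp_ofReal).mul (hasDerivAt_expNegPow u)).congr_deriv ?_
  rw [pow_add]
  ring

lemma Hgauss_eq_fourier (x : ℝ) :
    Hgauss μ β x = (1 / (2 * π)) • 𝓕 (expNegPow μ β) (-(x / (2 * π))) := by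
  rw [Hgauss, Real.fourier_real_eq_integral_exp_smul]
  congr 1
  refine integral_congr_ae (ae_of_all _ fun u => ?_)
  simp only [expNegPow, smul_eq_mul, ← Complex.exp_add]
  congr 1
  push_cast
  field_simp
  ring

theorem exists_norm_Hgauss_le (hμ : 1 ≤ μ) (hβ : 0 < β.re) :
    ∃ C, 0 ≤ C ∧ ∀ x, ‖Hgauss μ β x‖ ≤ C * (1 + x ^ 2)⁻¹ := by
  set c := -(2 * μ * β)
  set m := 2 * μ - 1
  set I := integrable_pow_mul_expNegPow hμ hβ
  set f'' : ℝ → ℂ := fun u =>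
    c * (m * ((u : ℂ) ^ (m - 1) * expNegPow μ β u) + c * ((u : ℂ) ^ (m + m) * expNegPow μ β u))
  have hf'' := mul_norm_fourier_le_of_hasDerivAt (hasDerivAt_expNegPow (μ := μ) (β := β))
    (f'' := f'') (fun u => (hasDerivAt_pow_mul_expNegPow m u).const_mul c)
    (by simpa using I 0) ((I m).const_mul c)
    ((((I (m - 1)).const_mul (m : ℂ)).add ((I (m + m)).const_mul c)).const_mul c)
  refine ⟨(2 * π)⁻¹ * ((∫ u, ‖expNegPow μ β u‖) + ∫ u, ‖f'' u‖), by positivity, fun x => ?_⟩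
  have hx := hf'' (-(x / (2 * π)))
  rw [show (2 * π * -(x / (2 * π))) ^ 2 = x ^ 2 by field_simp] at hx
  rw [Hgauss_eq_fourier, norm_smul, Real.norm_of_nonneg (by positivity), one_div, mul_assoc]
  gcongr
  rw [le_mul_inv_iff₀ (by positivity), mul_comm]
  exact hx

end GeneralizedGaussian

section LatticeSum

lemma summable_inv_one_add_sq : Summable fun k : ℕ => (1 + (k : ℝ) ^ 2)⁻¹ := by
  refine Summable.of_norm_bounded_eventually_nat (summable_nat_pow_inv.2 one_lt_two) ?_
  filter_upwards [Filter.eventually_ge_atTop 1] with k hk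
  rw [Real.norm_of_nonneg (by positivity)]
  exact inv_anti₀ (by positivity) (by linarith)

lemma card_Icc_ceil_floor_le (p l : ℝ) (hl : 0 ≤ l) : (#(Icc ⌈p⌉ ⌊p + l⌋) : ℝ) ≤ l + 1 := by
  have hZ : (#(Icc ⌈p⌉ ⌊p + l⌋) : ℤ) = max (⌊p + l⌋ + 1 - ⌈p⌉) 0 := by
    rw [Int.card_Icc, Int.toNat_eq_max]
  have hR : (#(Icc ⌈p⌉ ⌊p + l⌋) : ℝ) = max ((⌊p + l⌋ : ℝ) + 1 - ⌈p⌉) 0 := by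
    exact_mod_cast congrArg (Int.cast : ℤ → ℝ) hZ
  rw [hR]
  exact max_le (by linarith [Int.floor_le (p + l), Int.le_ceil p]) (by linarith)

lemma card_filter_floor_abs_sub_div_eq_le {l : ℝ} (hl : 1 ≤ l) (a : ℝ) (t : Finset ℤ) (k : ℕ) :
    (#(t.filter fun m : ℤ => ⌊|m - a| / l⌋₊ = k) : ℝ) ≤ 4 * l := by
  have hl0 : 0 < l := by linarith
  have hsub : t.filter (fun m : ℤ => ⌊|m - a| / l⌋₊ = k) ⊆
      Icc ⌈a - (k + 1) * l⌉ ⌊a - (k + 1) * l + l⌋ ∪ Icc ⌈a + k * l⌉ ⌊a + k * l + l⌋ := by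
    intro m hm
    obtain ⟨-, hk⟩ := mem_filter.1 hm
    have hlo : k * l ≤ |m - a| := by
      rw [← le_div_iff₀ hl0, ← hk]; exact Nat.floor_le (by positivity)
    have hhi : |m - a| < (k + 1) * l := by
      rw [← div_lt_iff₀ hl0, ← hk]; exact Nat.lt_floor_add_one _
    rcases abs_cases ((m : ℝ) - a) with ⟨he, -⟩ | ⟨he, -⟩ <;> rw [he] at hlo hhi
    · refine mem_union_right _ (mem_Icc.2 ⟨Int.ceil_le.2 ?_, Int.le_floor.2 ?_⟩) <;> linarith
    · refine mem_union_left _ (mem_Icc.2 ⟨Int.ceil_le.2 ?_, Int.le_floor.2 ?_⟩) <;> linarith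
  calc (#(t.filter fun m : ℤ => ⌊|m - a| / l⌋₊ = k) : ℝ)
      ≤ #(Icc ⌈a - (k + 1) * l⌉ ⌊a - (k + 1) * l + l⌋) + #(Icc ⌈a + k * l⌉ ⌊a + k * l + l⌋) := by
        exact_mod_cast (card_le_card hsub).trans (card_union_le _ _)
    _ ≤ (l + 1) + (l + 1) :=
        add_le_add (card_Icc_ceil_floor_le _ _ hl0.le) (card_Icc_ceil_floor_le _ _ hl0.le)
    _ ≤ 4 * l := by linarith

theorem exists_sum_inv_one_add_sq_div_le :
    ∃ L : ℝ, 1 ≤ L ∧ ∀ l : ℝ, 1 ≤ l → ∀ (a : ℝ) (t : Finset ℤ),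
      ∑ m ∈ t, (1 + ((m - a) / l) ^ 2)⁻¹ ≤ L * l := by
  set T := ∑' k : ℕ, (1 + (k : ℝ) ^ 2)⁻¹
  have hT : 1 ≤ T := by
    simpa using summable_inv_one_add_sq.le_tsum 0 fun k _ => by positivity
  refine ⟨4 * T, by linarith, fun l hl a t => ?_⟩
  have hl0 : 0 < l := by linarith
  set key : ℤ → ℕ := fun m => ⌊|m - a| / l⌋₊
  have hterm : ∀ m : ℤ, (1 + ((m - a) / l) ^ 2)⁻¹ ≤ (1 + (key m : ℝ) ^ 2)⁻¹ := fun m => by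
    refine inv_anti₀ (by positivity) ?_
    gcongr 1 + ?_
    rw [← sq_abs ((m - a) / l), abs_div, abs_of_pos hl0]
    exact pow_le_pow_left₀ (Nat.cast_nonneg _) (Nat.floor_le (by positivity)) 2
  calc ∑ m ∈ t, (1 + ((m - a) / l) ^ 2)⁻¹ ≤ ∑ m ∈ t, (1 + (key m : ℝ) ^ 2)⁻¹ :=
        sum_le_sum fun m _ => hterm m
    _ = ∑ k ∈ t.image key, #(t.filter fun m => key m = k) • (1 + (k : ℝ) ^ 2)⁻¹ :=
        sum_comp (fun k : ℕ => (1 + (k : ℝ) ^ 2)⁻¹) key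
    _ ≤ ∑ k ∈ t.image key, 4 * l * (1 + (k : ℝ) ^ 2)⁻¹ := sum_le_sum fun k _ => by
        rw [nsmul_eq_mul]
        exact mul_le_mul_of_nonneg_right (card_filter_floor_abs_sub_div_eq_le hl a t k)
          (by positivity)
    _ ≤ 4 * l * T := by
        rw [← mul_sum]
        exact mul_le_mul_of_nonneg_left
          (summable_inv_one_add_sq.sum_le_tsum _ fun k _ => by positivity) (by positivity)
    _ = 4 * T * l := by ring

end LatticeSum

section CauchyKernel

noncomputable def cauchyKernel (l b : ℝ) (j k : ℤ) : ℝ := l⁻¹ * (1 + ((b + k - j) / l) ^ 2)⁻¹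

variable {l b L : ℝ}

lemma cauchyKernel_nonneg (hl : 0 ≤ l) (j k : ℤ) : 0 ≤ cauchyKernel l b j k := by
  unfold cauchyKernel; positivity

lemma cauchyKernel_le (hl : 0 ≤ l) (j k : ℤ) : cauchyKernel l b j k ≤ l⁻¹ :=
  mul_le_of_le_one_right (inv_nonneg.2 hl) (inv_le_one_of_one_le₀ (by nlinarith))

lemma sum_cauchyKernel_right_le (hl : 0 < l)
    (hL : ∀ (a : ℝ) (t : Finset ℤ), ∑ m ∈ t, (1 + ((m - a) / l) ^ 2)⁻¹ ≤ L * l)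
    (j : ℤ) (t : Finset ℤ) : ∑ k ∈ t, cauchyKernel l b j k ≤ L := by
  have h := hL (j - b) t
  simp only [cauchyKernel, ← mul_sum]
  rw [inv_mul_le_iff₀ hl, mul_comm l]
  exact (sum_congr rfl fun k _ => by ring).trans_le h

lemma sum_cauchyKernel_left_le (hl : 0 < l)
    (hL : ∀ (a : ℝ) (t : Finset ℤ), ∑ m ∈ t, (1 + ((m - a) / l) ^ 2)⁻¹ ≤ L * l)
    (k : ℤ) (t : Finset ℤ) : ∑ j ∈ t, cauchyKernel l b j k ≤ L := by
  have h := hL (b + k) t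
  simp only [cauchyKernel, ← mul_sum]
  rw [inv_mul_le_iff₀ hl, mul_comm l]
  exact (sum_congr rfl fun j _ => by ring).trans_le h

end CauchyKernel

theorem exists_lp_of_norm_le_cauchyKernel_sum {E F : Type*} [NormedAddCommGroup E]
    [NormedAddCommGroup F] {p q : ℝ≥0∞} [Fact (1 ≤ p)] [Fact (1 ≤ q)] (hpq : p ≤ q)
    {l b L C : ℝ} (hl : 1 ≤ l) (hL1 : 1 ≤ L)
    (hL : ∀ (a : ℝ) (t : Finset ℤ), ∑ m ∈ t, (1 + ((m - a) / l) ^ 2)⁻¹ ≤ L * l) (hC : 0 ≤ C)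
    (h : lp (fun _ : ℤ => E) p) (s : ℤ → Finset ℤ) {G : ℤ → F}
    (hG : ∀ j, ‖G j‖ ≤ ∑ k ∈ s j, C * cauchyKernel l b j k * ‖h k‖) :
    ∃ g : lp (fun _ : ℤ => F) q, (∀ j, g j = G j) ∧
      ‖g‖ ≤ C * L * l⁻¹ ^ ((1 / p).toReal - (1 / q).toReal) * ‖h‖ := by
  have hl0 : 0 < l := by linarith
  have hCL : 0 ≤ C * L := by positivity
  refine exists_lp_of_norm_le_kernel_sum hpq hCL (by positivity)
    (fun j k => mul_nonneg hC (cauchyKernel_nonneg hl0.le j k)) (fun j => ?_) (fun k t => ?_)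
    (fun j k => ?_) hG
  · rw [← mul_sum]; exact mul_le_mul_of_nonneg_left (sum_cauchyKernel_right_le hl0 hL j _) hC
  · rw [← mul_sum]; exact mul_le_mul_of_nonneg_left (sum_cauchyKernel_left_le hl0 hL k _) hC
  · rw [mul_assoc]
    exact mul_le_mul_of_nonneg_left ((cauchyKernel_le hl0.le j k).trans
      (le_mul_of_one_le_left (by positivity) hL1)) hC

section KernelMatrix

variable {μ d : ℕ} {α : ℝ} {β : ℂ} {rv lv : Fin d → ℂ}

noncomputable def kernelMatrix (μ : ℕ) (α : ℝ) (β : ℂ) (rv lv : Fin d → ℂ) (n j0 : ℕ) (j : ℤ) :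
    Matrix (Fin d) (Fin d) ℂ :=
  if 0 ≤ j ∧ ((j : ℝ) - (j0 : ℝ)) / α ∈ Set.Icc ((n : ℝ) / 2) (2 * (n : ℝ)) then
    ((n : ℝ) ^ (-(1 / (2 * (μ : ℝ))))) •
      (Hgauss μ β (((n : ℝ) * α + (j0 : ℝ) - (j : ℝ)) / (n : ℝ) ^ (1 / (2 * (μ : ℝ)))) •
        Matrix.vecMulVec rv lv)
  else 0

lemma le_of_kernelMatrix_ne_zero (hα : α ≠ 0) {n j0 : ℕ} {j : ℤ}
    (h : kernelMatrix μ α β rv lv n j0 j ≠ 0) : (j0 : ℝ) ≤ j + 2 * n * |α| := by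
  unfold kernelMatrix at h
  split_ifs at h with hc
  · obtain ⟨-, hlo, hhi⟩ := hc
    have hq : 0 ≤ ((j : ℝ) - j0) / α := le_trans (by positivity) hlo
    have : |(j : ℝ) - j0| ≤ 2 * n * |α| := by
      rw [← div_mul_cancel₀ ((j : ℝ) - j0) hα, abs_mul, abs_of_nonneg hq]
      exact mul_le_mul_of_nonneg_right hhi (abs_nonneg α)
    linarith [neg_abs_le ((j : ℝ) - j0)]
  · exact absurd rfl h

variable (α rv lv) in
attribute [local instance] Matrix.linftyOpNormedAddCommGroup Matrix.linftyOpNormedSpace in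
theorem exists_norm_kernelMatrix_mulVec_le (hμ : 1 ≤ μ) (hβ : 0 < β.re) :
    ∃ C, 0 < C ∧ ∀ (n j0 : ℕ) (j : ℤ) (v : Fin d → ℂ),
      ‖(kernelMatrix μ α β rv lv n j0 j).mulVec v‖ ≤
        C * cauchyKernel ((n : ℝ) ^ (1 / (2 * (μ : ℝ)))) (n * α) j j0 * ‖v‖ := by
  obtain ⟨CH, hCH0, hCH⟩ := exists_norm_Hgauss_le hμ hβ
  set M := ‖Matrix.vecMulVec rv lv‖
  refine ⟨CH * M + 1, by positivity, fun n j0 j v => ?_⟩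
  set l := (n : ℝ) ^ (1 / (2 * (μ : ℝ)))
  have hl : 0 ≤ l := by positivity
  have hK := cauchyKernel_nonneg (b := n * α) hl j j0
  refine (Matrix.linfty_opNorm_mulVec _ v).trans (mul_le_mul_of_nonneg_right ?_ (norm_nonneg v))
  unfold kernelMatrix
  split_ifs
  · rw [norm_smul, norm_smul, Real.norm_of_nonneg (by positivity), rpow_neg (Nat.cast_nonneg n)]
    calc l⁻¹ * (‖Hgauss μ β ((n * α + j0 - j) / l)‖ * M)
        ≤ l⁻¹ * (CH * (1 + ((n * α + j0 - j) / l) ^ 2)⁻¹ * M) := by gcongr; exact hCH _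
      _ = CH * M * cauchyKernel l (n * α) j j0 := by unfold cauchyKernel; push_cast; ring
      _ ≤ (CH * M + 1) * cauchyKernel l (n * α) j j0 := by gcongr; linarith
  · rw [norm_zero]; positivity

end KernelMatrix

theorem stmt2_general (μ d : ℕ) (hμ : 1 ≤ μ) (α : ℝ) (hα : α ≠ 0)
    (β : ℂ) (hβ : 0 < β.re) (rv lv : Fin d → ℂ)
    (S : ℕ → ℕ → ℤ → Matrix (Fin d) (Fin d) ℂ)
    (hS : ∀ (n j0 : ℕ) (j : ℤ), S n j0 j =
      if 0 ≤ j ∧ ((j : ℝ) - (j0 : ℝ)) / α ∈ Set.Icc ((n : ℝ) / 2) (2 * (n : ℝ)) then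
        ((n : ℝ) ^ (-(1 / (2 * (μ : ℝ))))) •
          (Hgauss μ β (((n : ℝ) * α + (j0 : ℝ) - (j : ℝ)) / (n : ℝ) ^ (1 / (2 * (μ : ℝ)))) •
            Matrix.vecMulVec rv lv)
      else 0)
    (p1 p2 : ℝ≥0∞) (hp1 : 1 ≤ p1) (hp12 : p1 ≤ p2) :
    ∃ C : ℝ, 0 < C ∧ ∀ n : ℕ, 1 ≤ n → ∀ h : lp (fun _ : ℤ => (Fin d → ℂ)) p1,
      (∀ j : ℤ, {j0 : ℕ | (S n j0 j).mulVec (h (j0 : ℤ)) ≠ 0}.Finite) ∧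
      ∃ g : lp (fun _ : ℤ => (Fin d → ℂ)) p2,
        (∀ j : ℤ, g j = ∑ᶠ j0 : ℕ, (S n j0 j).mulVec (h (j0 : ℤ))) ∧
        ‖g‖ ≤ C * (n : ℝ) ^ (-(1 / (2 * (μ : ℝ))) * ((1 / p1).toReal - (1 / p2).toReal)) * ‖h‖ := by
  have : Fact (1 ≤ p1) := ⟨hp1⟩
  have : Fact (1 ≤ p2) := ⟨hp1.trans hp12⟩
  obtain rfl : S = kernelMatrix μ α β rv lv := funext fun n => funext fun j0 => funext (hS n j0)
  obtain ⟨CS, hCS, hCSv⟩ := exists_norm_kernelMatrix_mulVec_le α rv lv hμ hβ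
  obtain ⟨L, hL1, hL⟩ := exists_sum_inv_one_add_sq_div_le
  refine ⟨CS * L, by positivity, fun n hn h => ?_⟩
  set l := (n : ℝ) ^ (1 / (2 * (μ : ℝ)))
  have hl : 1 ≤ l := one_le_rpow (by exact_mod_cast hn) (by positivity)
  set s : ℤ → Finset ℕ := fun j => range (⌊(j : ℝ) + 2 * n * |α|⌋₊ + 1)
  have hsupp : ∀ j j0, (kernelMatrix μ α β rv lv n j0 j).mulVec (h j0) ≠ 0 → j0 ∈ s j :=
    fun j j0 hne => mem_range.2 <| Nat.lt_succ_of_le <| Nat.le_floor <|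
      le_of_kernelMatrix_ne_zero hα fun h0 => hne (by rw [h0, Matrix.zero_mulVec])
  refine ⟨fun j => (s j).finite_toSet.subset fun j0 => hsupp j j0, ?_⟩
  obtain ⟨g, hg, hgn⟩ := exists_lp_of_norm_le_cauchyKernel_sum hp12 hl hL1 (hL l hl) hCS.le h
    (fun j => (s j).map Nat.castEmbedding) (b := n * α)
    (G := fun j => ∑ j0 ∈ s j, (kernelMatrix μ α β rv lv n j0 j).mulVec (h j0)) fun j => by
      rw [sum_map]
      exact (norm_sum_le _ _).trans (sum_le_sum fun j0 _ => hCSv n j0 j _)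
  refine ⟨g, fun j => (hg j).trans (finsum_eq_sum_of_support_subset _ fun j0 => hsupp j j0).symm,
    hgn.trans_eq ?_⟩
  rw [← rpow_neg (Nat.cast_nonneg n), ← rpow_mul (Nat.cast_nonneg n)]

theorem stmt2 (μ d : ℕ) (hμ : 1 ≤ μ) (hd : 1 ≤ d) (α : ℝ) (hα : α ≠ 0)
    (β : ℂ) (hβ : 0 < β.re) (rv lv : Fin d → ℂ)
    (S : ℕ → ℕ → ℤ → Matrix (Fin d) (Fin d) ℂ)
    (hS : ∀ (n j0 : ℕ) (j : ℤ), S n j0 j =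
      if 0 ≤ j ∧ ((j : ℝ) - (j0 : ℝ)) / α ∈ Set.Icc ((n : ℝ) / 2) (2 * (n : ℝ)) then
        ((n : ℝ) ^ (-(1 / (2 * (μ : ℝ))))) •
          (Hgauss μ β (((n : ℝ) * α + (j0 : ℝ) - (j : ℝ)) / (n : ℝ) ^ (1 / (2 * (μ : ℝ)))) •
            Matrix.vecMulVec rv lv)
      else 0)
    (p1 p2 : ℝ≥0∞) (hp1 : 1 ≤ p1) (hp12 : p1 ≤ p2) :
    ∃ C : ℝ, 0 < C ∧ ∀ n : ℕ, 1 ≤ n → ∀ h : lp (fun _ : ℤ => (Fin d → ℂ)) p1,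
      (∀ j : ℤ, {j0 : ℕ | (S n j0 j).mulVec (h (j0 : ℤ)) ≠ 0}.Finite) ∧
      ∃ g : lp (fun _ : ℤ => (Fin d → ℂ)) p2,
        (∀ j : ℤ, g j = ∑ᶠ j0 : ℕ, (S n j0 j).mulVec (h (j0 : ℤ))) ∧
        ‖g‖ ≤ C * (n : ℝ) ^ (-(1 / (2 * (μ : ℝ))) * ((1 / p1).toReal - (1 / p2).toReal)) * ‖h‖ :=
  stmt2_general μ d hμ α hα β hβ rv lv S hS p1 p2 hp1 hp12
end

section
/- Let c_H > 0, C_H > 0 and θ ∈ (0,1). Set Θ := θ (1 − e^{−c_H})/(1 + e^{−c_H}), r := cosh(c_H) − 2 sinh(c_H/2) √(cosh²(c_H/2) − θ) and ρ := (C_H/Θ)(r − e^{−c_H}). Then r ∈ (e^{−c_H}, 1) and ρ > 0, and every bounded sequence (y_j)_{j∈ℕ} of nonnegative real numbers satisfying y_j ≤ C_H e^{−c_H j} + Θ Σ_{k=0}^{∞} e^{−c_H |j−1−k|} y_k for all j ∈ ℕ satisfies y_j ≤ ρ r^j for all j ∈ ℕ. -/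
/-!
Write `q = e^{-c_H}`. The kernel `e^{-c_H |j-1-k|}` has row sums at most `(1+q)/(1-q)`, so
`Θ` times it is a contraction with constant `θ`; hence any bounded subsolution lies below any
bounded solution of `z = C_H q^j + Θ K z`. Applied to the geometric sequence `ρ r^j`, the
equation reduces to `(r - q)(1 - q r) = θ (1 - q)^2`, i.e.
`r² - 2 cosh(c_H) r + 1 + 4θ sinh²(c_H/2) = 0`, whose smaller root is the given `r`.
-/

open Real Finset

theorem le_of_le_add_tsum_of_eq_add_tsum {ι : Type*} {K : ι → ι → ℝ} {f y z : ι → ℝ} {θ : ℝ}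
    (hK0 : ∀ i k, 0 ≤ K i k) (hKs : ∀ i, Summable (K i)) (hKθ : ∀ i, ∑' k, K i k ≤ θ)
    (hθ : θ < 1) (hKy : ∀ i, Summable fun k => K i k * y k)
    (hKz : ∀ i, Summable fun k => K i k * z k) (hyz : BddAbove (Set.range (y - z)))
    (hsub : ∀ i, y i ≤ f i + ∑' k, K i k * y k) (hsol : ∀ i, f i + ∑' k, K i k * z k = z i) :
    y ≤ z := by
  intro i
  have : Nonempty ι := ⟨i⟩
  set s := max (⨆ j, (y - z) j) 0
  have hs0 : 0 ≤ s := le_max_right _ _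
  have hle : ∀ j, y j - z j ≤ s := fun j => (le_ciSup hyz j).trans (le_max_left _ _)
  have hθ0 : 0 ≤ θ := (tsum_nonneg (hK0 i)).trans (hKθ i)
  have hstep : ∀ j, y j - z j ≤ θ * s := fun j => calc
    y j - z j ≤ ∑' k, K j k * y k - ∑' k, K j k * z k := by linarith [hsub j, hsol j]
    _ = ∑' k, K j k * (y k - z k) := by simp only [mul_sub]; exact ((hKy j).tsum_sub (hKz j)).symm
    _ ≤ ∑' k, K j k * s :=
      ((hKy j).sub (hKz j)).congr (fun k => (mul_sub _ _ _).symm) |>.tsum_le_tsum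
        (fun k => mul_le_mul_of_nonneg_left (hle k) (hK0 j k)) ((hKs j).mul_right s)
    _ = (∑' k, K j k) * s := tsum_mul_right
    _ ≤ θ * s := mul_le_mul_of_nonneg_right (hKθ j) hs0
  have hs : s ≤ θ * s := max_le (ciSup_le hstep) (mul_nonneg hθ0 hs0)
  have : s ≤ 0 := by nlinarith
  linarith [hle i]

noncomputable def shiftKernel (c : ℝ) (j k : ℕ) : ℝ := exp (-c * |(j : ℝ) - 1 - k|)

lemma shiftKernel_pos (c : ℝ) (j k : ℕ) : 0 < shiftKernel c j k := exp_pos _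

section shiftKernel

variable {c : ℝ}

lemma shiftKernel_of_lt {j k : ℕ} (h : k < j) : shiftKernel c j k = exp (-c) ^ (j - 1 - k) := by
  have hcast : (j : ℝ) - 1 - k = ((j - 1 - k : ℕ) : ℝ) := by
    rw [Nat.cast_sub (by omega), Nat.cast_sub (by omega)]
    simp
  rw [shiftKernel, hcast, Nat.abs_cast, ← exp_nat_mul, mul_comm]

lemma shiftKernel_add_right (i j : ℕ) : shiftKernel c j (i + j) = exp (-c) ^ (i + 1) := by
  have hcast : |(j : ℝ) - 1 - ((i + j : ℕ) : ℝ)| = ((i + 1 : ℕ) : ℝ) := by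
    push_cast
    rw [abs_of_nonpos (by linarith)]
    ring
  rw [shiftKernel, hcast, ← exp_nat_mul, mul_comm]

lemma summable_shiftKernel (hc : 0 < c) (j : ℕ) : Summable (shiftKernel c j) := by
  rw [← summable_nat_add_iff j]
  simp only [shiftKernel_add_right, pow_succ]
  exact (summable_geometric_of_lt_one (exp_nonneg _) (exp_lt_one_iff.mpr (by linarith))).mul_right _

lemma summable_shiftKernel_mul (hc : 0 < c) (j : ℕ) {g : ℕ → ℝ} {M : ℝ} (hg : ∀ k, |g k| ≤ M) :
    Summable fun k => shiftKernel c j k * g k :=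
  ((summable_shiftKernel hc j).mul_right M).of_norm_bounded fun k => by
    rw [norm_mul, Real.norm_of_nonneg (shiftKernel_pos c j k).le, Real.norm_eq_abs]
    exact mul_le_mul_of_nonneg_left (hg k) (shiftKernel_pos c j k).le

lemma tsum_shiftKernel_mul_pow {r : ℝ} (hrq : r ≠ exp (-c)) (hqr : |exp (-c) * r| < 1) (j : ℕ) :
    ∑' k, shiftKernel c j k * r ^ k
      = (r ^ j - exp (-c) ^ j) / (r - exp (-c)) + exp (-c) * r ^ j / (1 - exp (-c) * r) := by
  set q := exp (-c)
  have htail : ∀ i, shiftKernel c j (i + j) * r ^ (i + j) = q * r ^ j * (q * r) ^ i := by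
    intro i
    rw [shiftKernel_add_right]
    ring
  have hsum : Summable fun k => shiftKernel c j k * r ^ k := by
    rw [← summable_nat_add_iff j]
    simp only [htail]
    exact (summable_geometric_of_abs_lt_one hqr).mul_left _
  have hhead : ∑ k ∈ range j, shiftKernel c j k * r ^ k = (r ^ j - q ^ j) / (r - q) := by
    rw [eq_div_iff (sub_ne_zero.mpr hrq), ← geom_sum₂_mul]
    congr 1
    refine sum_congr rfl fun k hk => ?_
    rw [shiftKernel_of_lt (mem_range.mp hk), mul_comm]
  rw [← hsum.sum_add_tsum_nat_add j, hhead, tsum_congr htail, tsum_mul_left,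
    tsum_geometric_of_abs_lt_one hqr, ← div_eq_mul_inv]

lemma tsum_shiftKernel_le (hc : 0 < c) (j : ℕ) :
    ∑' k, shiftKernel c j k ≤ (1 + exp (-c)) / (1 - exp (-c)) := by
  have hq1 : exp (-c) < 1 := exp_lt_one_iff.mpr (by linarith)
  have hq : |exp (-c) * 1| < 1 := by rwa [mul_one, abs_of_pos (exp_pos _)]
  have h := tsum_shiftKernel_mul_pow hq1.ne' hq j
  simp only [one_pow, mul_one] at h
  rw [h, ← sub_nonneg]
  have : 0 ≤ exp (-c) ^ j / (1 - exp (-c)) := div_nonneg (by positivity) (by linarith)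
  convert this using 1
  ring

lemma shiftKernel_geometric_solution {C Θ ρ r : ℝ} (hΘ : Θ ≠ 0) (hrq : r ≠ exp (-c))
    (hqr : |exp (-c) * r| < 1) (hΘρ : Θ * ρ = C * (r - exp (-c)))
    (hroot : Θ * (1 - exp (-c) ^ 2) = (r - exp (-c)) * (1 - exp (-c) * r)) (j : ℕ) :
    C * exp (-c * j) + Θ * ∑' k, shiftKernel c j k * (ρ * r ^ k) = ρ * r ^ j := by
  have hqr1 : 1 - exp (-c) * r ≠ 0 := sub_ne_zero.mpr (fun h => by simp [← h] at hqr)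
  simp only [mul_left_comm _ ρ, tsum_mul_left]
  rw [tsum_shiftKernel_mul_pow hrq hqr, mul_comm (-c), exp_nat_mul]
  set q := exp (-c)
  set A := (r ^ j - q ^ j) / (r - q)
  set B := q * r ^ j / (1 - q * r)
  have hA : (r - q) * A = r ^ j - q ^ j := mul_div_cancel₀ _ (sub_ne_zero.mpr hrq)
  have hB : (1 - q * r) * B = q * r ^ j := mul_div_cancel₀ _ hqr1
  -- once `Θ ρ = C (r - q)` is substituted, the `q ^ j` terms cancel and `hroot` balances
  -- the `r ^ j` terms
  apply mul_left_cancel₀ (mul_ne_zero hqr1 hΘ)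
  linear_combination C * r ^ j * hroot + Θ * C * (r - q) * hB
    + (1 - q * r) * (Θ * (A + B) - r ^ j) * hΘρ + (1 - q * r) * Θ * C * hA

lemma le_of_shiftKernel_subsolution {Θ : ℝ} {f y z : ℕ → ℝ} {M N : ℝ} (hc : 0 < c)
    (hΘ : 0 ≤ Θ) (hΘ1 : Θ * ((1 + exp (-c)) / (1 - exp (-c))) < 1) (hy : ∀ k, |y k| ≤ M)
    (hz : ∀ k, |z k| ≤ N) (hsub : ∀ j, y j ≤ f j + Θ * ∑' k, shiftKernel c j k * y k)
    (hsol : ∀ j, f j + Θ * ∑' k, shiftKernel c j k * z k = z j) : y ≤ z := by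
  refine le_of_le_add_tsum_of_eq_add_tsum (K := fun j k => Θ * shiftKernel c j k) (f := f)
    (fun j k => mul_nonneg hΘ (shiftKernel_pos c j k).le)
    (fun j => (summable_shiftKernel hc j).mul_left Θ) (fun j => ?_) hΘ1
    (fun j => ?_) (fun j => ?_) ⟨M + N, ?_⟩ (fun j => ?_) (fun j => ?_)
  · rw [tsum_mul_left]
    exact mul_le_mul_of_nonneg_left (tsum_shiftKernel_le hc j) hΘ
  · simpa only [mul_assoc] using (summable_shiftKernel_mul hc j hy).mul_left Θ
  · simpa only [mul_assoc] using (summable_shiftKernel_mul hc j hz).mul_left Θ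
  · rintro _ ⟨j, rfl⟩
    linarith [le_abs_self (y j), neg_abs_le (z j), hy j, hz j, Pi.sub_apply y z j]
  · simpa only [mul_assoc, tsum_mul_left] using hsub j
  · simpa only [mul_assoc, tsum_mul_left] using hsol j

end shiftKernel

noncomputable def decayRate (c θ : ℝ) : ℝ :=
  cosh c - 2 * sinh (c / 2) * √(cosh (c / 2) ^ 2 - θ)

section decayRate

variable {c θ : ℝ}

lemma decayRate_eq (c θ : ℝ) :
    decayRate c θ = cosh (c / 2) ^ 2 + sinh (c / 2) ^ 2
      - 2 * sinh (c / 2) * √(cosh (c / 2) ^ 2 - θ) := by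
  rw [decayRate, ← cosh_two_mul, mul_div_cancel₀ c two_ne_zero]

lemma exp_neg_eq_cosh_sub_sinh_sq (c : ℝ) : exp (-c) = (cosh (c / 2) - sinh (c / 2)) ^ 2 := by
  rw [cosh_sub_sinh, sq, ← exp_add]
  ring_nf

lemma exp_neg_lt_decayRate (hc : 0 < c) (hθ : 0 < θ) : exp (-c) < decayRate c θ := by
  have hs : 0 < sinh (c / 2) := sinh_pos_iff.mpr (by linarith)
  have hw : √(cosh (c / 2) ^ 2 - θ) < cosh (c / 2) := (sqrt_lt' (cosh_pos _)).mpr (by linarith)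
  rw [decayRate_eq, exp_neg_eq_cosh_sub_sinh_sq]
  linarith [mul_pos hs (sub_pos.mpr hw)]

lemma decayRate_lt_one (hc : 0 < c) (hθ : θ < 1) : decayRate c θ < 1 := by
  have hs : 0 < sinh (c / 2) := sinh_pos_iff.mpr (by linarith)
  have hw : sinh (c / 2) < √(cosh (c / 2) ^ 2 - θ) :=
    (lt_sqrt hs.le).mpr (by linarith [cosh_sq (c / 2)])
  rw [decayRate_eq]
  nlinarith [mul_pos hs (sub_pos.mpr hw), cosh_sq (c / 2)]

lemma decayRate_root (hθ : θ ≤ cosh (c / 2) ^ 2) :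
    (decayRate c θ - exp (-c)) * (1 - exp (-c) * decayRate c θ) = θ * (1 - exp (-c)) ^ 2 := by
  have hw := sq_sqrt (sub_nonneg.mpr hθ)
  have hh := cosh_sq (c / 2)
  rw [decayRate_eq, exp_neg_eq_cosh_sub_sinh_sq]
  set s := sinh (c / 2)
  set h := cosh (c / 2)
  set w := √(h ^ 2 - θ)
  set q := (h - s) ^ 2
  set r := h ^ 2 + s ^ 2 - 2 * s * w
  -- `r` solves `r² - 2 (h² + s²) r + 1 + 4 θ s² = 0`, and `q (h + s)² = 1`
  linear_combination (-4 * q * s ^ 2) * hw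
    + (q * (h ^ 2 - s ^ 2 + 1) - (h ^ 2 - s ^ 2 + 1) * r - θ * (2 * q - h ^ 2 + s ^ 2 - 1)) * hh

end decayRate

theorem stmt3 (cH CH θ : ℝ) (hcH : 0 < cH) (hCH : 0 < CH) (hθ0 : 0 < θ) (hθ1 : θ < 1) :
    let Θ : ℝ := θ * (1 - Real.exp (-cH)) / (1 + Real.exp (-cH))
    let r : ℝ := Real.cosh cH - 2 * Real.sinh (cH / 2) * Real.sqrt (Real.cosh (cH / 2) ^ 2 - θ)
    let ρ : ℝ := CH / Θ * (r - Real.exp (-cH))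
    (Real.exp (-cH) < r ∧ r < 1) ∧ 0 < ρ ∧
      ∀ y : ℕ → ℝ, (∃ M : ℝ, ∀ j, y j ≤ M) → (∀ j, 0 ≤ y j) →
        (∀ j : ℕ, y j ≤ CH * Real.exp (-cH * j) +
          Θ * ∑' k : ℕ, Real.exp (-cH * |(j : ℝ) - 1 - (k : ℝ)|) * y k) →
        ∀ j : ℕ, y j ≤ ρ * r ^ j := by
  intro Θ r ρ
  have hΘdef : Θ = θ * (1 - exp (-cH)) / (1 + exp (-cH)) := rfl
  have hq1 : exp (-cH) < 1 := exp_lt_one_iff.mpr (by linarith)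
  have hqr : exp (-cH) < r := exp_neg_lt_decayRate hcH hθ0
  have hr1 : r < 1 := decayRate_lt_one hcH hθ1
  have hr0 : 0 < r := (exp_pos _).trans hqr
  have hΘ : 0 < Θ := div_pos (mul_pos hθ0 (sub_pos.mpr hq1)) (by positivity)
  refine ⟨⟨hqr, hr1⟩, mul_pos (div_pos hCH hΘ) (sub_pos.mpr hqr), ?_⟩
  rintro y ⟨M, hM⟩ hy0 hy
  have hroot : (r - exp (-cH)) * (1 - exp (-cH) * r) = θ * (1 - exp (-cH)) ^ 2 :=
    decayRate_root (by nlinarith [one_le_cosh (cH / 2)])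
  have hz := shiftKernel_geometric_solution (C := CH) (ρ := ρ) hΘ.ne' hqr.ne'
    (by rw [abs_of_pos (by positivity)]; nlinarith) (by simp only [ρ]; field_simp)
    (by rw [hroot, hΘdef]; field_simp; ring)
  refine le_of_shiftKernel_subsolution hcH hΘ.le ?_
    (fun k => (abs_of_nonneg (hy0 k)).trans_le (hM k)) (N := ρ) (fun k => ?_) hy hz
  · rwa [hΘdef, div_mul_div_comm, mul_assoc, mul_comm (1 - _), ← mul_assoc,
      mul_div_mul_right _ _ (sub_pos.mpr hq1).ne', mul_div_cancel_right₀ _ (by positivity)]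
  · rw [abs_of_nonneg (by positivity)]
    exact mul_le_of_le_one_right (by positivity) (pow_le_one₀ hr0.le hr1.le)
end

section
/- With the notation of the context, let z belong to the unbounded connected component of ℂ \ 𝓕(𝕊¹). Then the companion matrix M(z) has no eigenvalue of modulus 1, and, counted with algebraic multiplicity, it has exactly p eigenvalues in 𝔻 \ {0} and exactly q eigenvalues in 𝕌. -/
/-!
Up to the factor `(-λ_q)⁻¹`, the characteristic polynomial of `M(z)` is
`P_z(κ) = z κ ^ p - κ ^ p 𝓕(κ)`, which equals `κ ^ p (z - 𝓕(κ))` for `κ ≠ 0`. So `P_z` has no root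
on `𝕊¹` when `z ∉ 𝓕(𝕊¹)`, and `0` is never a root because `P_z(0) = -λ_{-p}`.

By the argument principle, the number of roots of `P_w` in `𝔻` is `(2πi)⁻¹ ∮ P_w' / P_w`, a
continuous integer-valued function of `w` off `𝓕(𝕊¹)`, hence constant on connected components.
For large `|w|`, `P_w / w = X ^ p - w⁻¹ κ ^ p 𝓕(κ)` is a small perturbation of `X ^ p`, whose `p`
roots all lie at `0`; so the count is `p` on the unbounded component, and the remaining `q` of the
`p + q` roots lie in `𝕌`.
-/

open scoped Classical Real
open Polynomial Metric

section CompanionMatrix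

variable {R : Type*} [CommRing R]

theorem Matrix.charmatrix_submatrix {m n : Type*} [Fintype m] [Fintype n] [DecidableEq m]
    [DecidableEq n] (M : Matrix n n R) {e : m → n} (he : Function.Injective e) :
    M.charmatrix.submatrix e e = (M.submatrix e e).charmatrix := by
  ext i j
  rcases eq_or_ne i j with rfl | h
  · simp [Matrix.charmatrix_apply_eq]
  · simp [Matrix.charmatrix_apply_ne _ _ _ h, Matrix.charmatrix_apply_ne _ _ _ (he.ne h)]

def companionMatrix {n : ℕ} (c : Fin n → R) : Matrix (Fin n) (Fin n) R :=
  Matrix.of fun i j => if (i : ℕ) = 0 then c j else if (i : ℕ) = j + 1 then 1 else 0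

theorem companionMatrix_submatrix_castSucc {n : ℕ} (c : Fin (n + 1) → R) :
    (companionMatrix c).submatrix Fin.castSucc Fin.castSucc =
      companionMatrix (c ∘ Fin.castSucc) := by
  ext i j
  simp only [Matrix.submatrix_apply, companionMatrix, Matrix.of_apply, Fin.val_castSucc,
    Function.comp_apply]

theorem det_charmatrix_companionMatrix_submatrix_succ_castSucc {n : ℕ} (c : Fin (n + 1) → R) :
    ((companionMatrix c).charmatrix.submatrix Fin.succ Fin.castSucc).det = (-1) ^ n := by
  have hne {i j : Fin n} (h : (j : ℕ) ≤ i) : i.succ ≠ j.castSucc := by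
    simp only [ne_eq, Fin.ext_iff, Fin.val_succ, Fin.val_castSucc]; omega
  rw [Matrix.det_of_isUpperTriangular]
  · simp [Matrix.charmatrix_apply_ne _ _ _ (hne le_rfl), companionMatrix]
  · intro i j hji
    have : (j : ℕ) < i := hji
    simp only [Matrix.submatrix_apply, Matrix.charmatrix_apply_ne _ _ _ (hne this.le),
      companionMatrix, Matrix.of_apply, Fin.val_succ, Fin.val_castSucc]
    rw [if_neg (by omega), if_neg (by omega), map_zero, neg_zero]

theorem charpoly_companionMatrix_succ_succ {n : ℕ} (c : Fin (n + 2) → R) :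
    (companionMatrix c).charpoly =
      X * (companionMatrix (c ∘ Fin.castSucc)).charpoly - C (c (Fin.last _)) := by
  have h0 : (0 : Fin (n + 2)) ≠ Fin.last (n + 1) := Fin.last_pos.ne
  have hcol (i : Fin (n + 2)) (h0 : i ≠ 0) (hl : i ≠ Fin.last (n + 1)) :
      (companionMatrix c).charmatrix i (Fin.last (n + 1)) = 0 := by
    have := Fin.val_lt_last hl
    rw [Matrix.charmatrix_apply_ne _ _ _ hl]
    simp only [companionMatrix, Matrix.of_apply, Fin.val_last]
    rw [if_neg (Fin.val_ne_zero_iff.mpr h0), if_neg (by omega), map_zero, neg_zero]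
  have hfirst : (companionMatrix c).charmatrix 0 (Fin.last (n + 1)) = -C (c (Fin.last _)) := by
    simp [companionMatrix]
  have hlast : (companionMatrix c).charmatrix (Fin.last _) (Fin.last (n + 1)) = X := by
    simp [Matrix.charmatrix_apply_eq, companionMatrix]
  have hsign : ((-1) ^ (n + 1 + (n + 1)) : R[X]) = 1 := Even.neg_one_pow ⟨_, rfl⟩
  rw [Matrix.charpoly, Matrix.det_succ_column _ (Fin.last (n + 1)),
    Fintype.sum_eq_add 0 (Fin.last (n + 1)) h0 (fun i hi => by simp [hcol i hi.1 hi.2]),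
    Fin.succAbove_zero, Fin.succAbove_last, det_charmatrix_companionMatrix_submatrix_succ_castSucc,
    Matrix.charmatrix_submatrix _ (Fin.castSucc_injective _), companionMatrix_submatrix_castSucc,
    ← Matrix.charpoly, hfirst, hlast, Fin.val_zero, Fin.val_last, zero_add]
  linear_combination (-C (c (Fin.last (n + 1))) +
    X * (companionMatrix (c ∘ Fin.castSucc)).charpoly) * hsign

theorem charpoly_companionMatrix {n : ℕ} (c : Fin n → R) :
    (companionMatrix c).charpoly = X ^ n - ∑ j, C (c j) * X ^ (j.rev : ℕ) := by
  induction n with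
  | zero => simp [Matrix.charpoly_isEmpty]
  | succ n ih =>
    cases n with
    | zero => simp [Matrix.charpoly, companionMatrix]
    | succ n =>
      have hsum : ∑ j : Fin (n + 1), C (c j.castSucc) * X ^ (j.castSucc.rev : ℕ) =
          (∑ j : Fin (n + 1), C (c j.castSucc) * X ^ (j.rev : ℕ)) * X := by
        simp only [Fin.rev_castSucc, Fin.val_succ, Finset.sum_mul, pow_succ, mul_assoc]
      rw [charpoly_companionMatrix_succ_succ, ih, Fin.sum_univ_castSucc (n := n + 1), hsum,
        Fin.rev_last, Fin.val_zero, pow_zero, mul_one]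
      simp only [Function.comp_apply]
      ring

theorem charpoly_companionMatrix_eq_C_inv_mul {K : Type*} [Field K] {n : ℕ} (a : ℕ → K)
    (ha : a n ≠ 0) :
    (companionMatrix fun j : Fin n => -(a n)⁻¹ * a j.rev).charpoly =
      C (a n)⁻¹ * ∑ m ∈ Finset.range (n + 1), C (a m) * X ^ m := by
  have hrev : ∑ j : Fin n, C (-(a n)⁻¹ * a j.rev) * X ^ (j.rev : ℕ) =
      ∑ m ∈ Finset.range n, C (-(a n)⁻¹ * a m) * X ^ m := by
    rw [← Fin.sum_univ_eq_sum_range (fun m => C (-(a n)⁻¹ * a m) * X ^ m)]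
    exact Fintype.sum_equiv Fin.revPerm _ _ fun j => rfl
  rw [charpoly_companionMatrix, hrev, Finset.sum_range_succ, mul_add, Finset.mul_sum,
    ← mul_assoc, ← C_mul, inv_mul_cancel₀ ha, C_1, one_mul, sub_eq_neg_add,
    ← Finset.sum_neg_distrib]
  congr 1
  refine Finset.sum_congr rfl fun m _ => ?_
  simp only [C_mul, C_neg]
  ring

end CompanionMatrix

section CircleIntegral

variable {E : Type*} [NormedAddCommGroup E] [NormedSpace ℂ E] {c : ℂ} {R : ℝ}

theorem continuousOn_circleIntegral_of_continuousOn_uncurry {α : Type*} [TopologicalSpace α]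
    {f : α → ℂ → E} {s : Set α} (hR : 0 ≤ R)
    (hf : ContinuousOn (Function.uncurry f) (s ×ˢ sphere c R)) :
    ContinuousOn (fun x => ∮ z in C(c, R), f x z) s := by
  rw [continuousOn_iff_continuous_domRestrict]
  unfold circleIntegral
  refine intervalIntegral.continuous_parametric_intervalIntegral_of_continuous'
    (μ := MeasureTheory.volume)
    (f := fun (x : s) θ => deriv (circleMap c R) θ • f x (circleMap c R θ)) ?_ 0 (2 * π)
  simp only [deriv_circleMap]
  refine Continuous.smul (by fun_prop) (hf.comp_continuous
    (f := fun y : s × ℝ => (y.1.1, circleMap c R y.2)) (by fun_prop) fun y => ?_)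
  exact ⟨y.1.2, circleMap_mem_sphere c hR y.2⟩

theorem circleIntegral_one_div_sub {r : ℂ} (hR : 0 ≤ R) (hr : r ∉ sphere c R) :
    (∮ z in C(c, R), 1 / (z - r)) = if r ∈ ball c R then 2 * π * Complex.I else 0 := by
  simp only [one_div]
  split_ifs with hball
  · exact circleIntegral.integral_sub_inv_of_mem_ball hball
  · have hout : r ∉ closedBall c R := by
      rw [← sphere_union_ball]; exact fun h => h.elim hr hball
    have hne : ∀ z ∈ closedBall c R, z - r ≠ 0 := fun z hz =>
      sub_ne_zero.mpr (ne_of_mem_of_not_mem hz hout)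
    refine Complex.circleIntegral_eq_zero_of_differentiable_on_off_countable hR
      Set.countable_empty ((continuousOn_id.sub continuousOn_const).inv₀ hne) fun z hz => ?_
    exact ((differentiableAt_id.sub_const r).inv (hne z (ball_subset_closedBall hz.1)))

theorem circleIntegral_multiset_sum_one_div_sub {s : Multiset ℂ} (hR : 0 ≤ R)
    (hs : ∀ r ∈ s, r ∉ sphere c R) :
    (∮ z in C(c, R), (s.map fun r => 1 / (z - r)).sum) =
      2 * π * Complex.I * Multiset.card (s.filter (· ∈ ball c R)) := by
  induction s using Multiset.induction_on with
  | empty => simp [circleIntegral]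
  | cons a s ih =>
    have ha := hs a (Multiset.mem_cons_self a s)
    have hs' := fun r hr => hs r (Multiset.mem_cons_of_mem hr)
    have hint : CircleIntegrable (fun z => (s.map fun r => 1 / (z - r)).sum) c R := by
      refine ContinuousOn.circleIntegrable hR (continuousOn_multiset_sum _ fun r hr => ?_)
      exact continuousOn_const.div (continuousOn_id.sub continuousOn_const) fun z hz =>
        sub_ne_zero.mpr (ne_of_mem_of_not_mem hz (hs' r hr))
    have hinta : CircleIntegrable (fun z => 1 / (z - a)) c R := by
      simpa only [one_div] using
        circleIntegrable_sub_inv_iff.mpr (Or.inr (by rwa [abs_of_nonneg hR]))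
    simp only [Multiset.map_cons, Multiset.sum_cons]
    rw [circleIntegral.integral_add hinta hint, ih hs',
      circleIntegral_one_div_sub hR ha, Multiset.filter_cons]
    split_ifs
    · rw [Multiset.card_add, Multiset.card_singleton, Nat.cast_add, Nat.cast_one]; ring
    · simp only [zero_add]

theorem circleIntegral_eval_derivative_div_eval (P : ℂ[X]) (hR : 0 ≤ R)
    (hP : ∀ z ∈ sphere c R, eval z P ≠ 0) :
    (∮ z in C(c, R), eval z (derivative P) / eval z P) =
      2 * π * Complex.I * Multiset.card (P.roots.filter (· ∈ ball c R)) := by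
  rw [circleIntegral.integral_congr hR fun z hz =>
    (IsAlgClosed.splits P).eval_derivative_div_eval_of_ne_zero (hP z hz)]
  exact circleIntegral_multiset_sum_one_div_sub hR fun r hr hrs =>
    hP r hrs (isRoot_of_mem_roots hr)

theorem IsPreconnected.card_roots_filter_mem_ball_eq (G H : ℂ[X]) {s : Set ℂ}
    (hs : IsPreconnected s) (hR : 0 ≤ R)
    (hsph : ∀ x ∈ s, ∀ z ∈ sphere c R, eval z (C x * G + H) ≠ 0)
    {x y : ℂ} (hx : x ∈ s) (hy : y ∈ s) :
    Multiset.card ((C x * G + H).roots.filter (· ∈ ball c R)) =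
      Multiset.card ((C y * G + H).roots.filter (· ∈ ball c R)) := by
  refine hs.constant (f := fun x => Multiset.card ((C x * G + H).roots.filter (· ∈ ball c R)))
    ?_ hx hy
  rw [Nat.isClosedEmbedding_coe_real.isInducing.continuousOn_iff]
  have hI : ContinuousOn (fun x => ∮ z in C(c, R),
      eval z (derivative (C x * G + H)) / eval z (C x * G + H)) s := by
    refine continuousOn_circleIntegral_of_continuousOn_uncurry hR ?_
    simp only [derivative_add, derivative_mul, derivative_C, zero_mul, zero_add, eval_add,
      eval_mul, eval_C]
    exact ContinuousOn.div (by fun_prop) (by fun_prop) fun y hy => by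
      simpa using hsph y.1 hy.1 y.2 hy.2
  refine (Complex.continuous_re.comp_continuousOn
    ((continuousOn_const (c := (2 * π * Complex.I)⁻¹)).mul hI)).congr fun x hx => ?_
  simp only [Function.comp_apply, Pi.mul_apply, Complex.natCast_re,
    circleIntegral_eval_derivative_div_eval _ hR (hsph x hx),
    inv_mul_cancel_left₀ Complex.two_pi_I_ne_zero]

end CircleIntegral

theorem card_roots_C_mul_X_pow_sub_filter_mem_ball_eq (A : ℂ[X]) (p : ℕ) {R : ℝ} (hR : 0 < R)
    {U : Set ℂ} (hU : IsPreconnected U) (hUb : ¬ Bornology.IsBounded U)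
    (hsph : ∀ w ∈ U, ∀ z ∈ sphere (0 : ℂ) R, eval z (C w * X ^ p - A) ≠ 0)
    {w : ℂ} (hw : w ∈ U) :
    Multiset.card ((C w * X ^ p - A).roots.filter (· ∈ ball 0 R)) = p := by
  set Q : ℂ → ℂ[X] := fun t => C t * -A + X ^ p with hQ
  obtain ⟨δ, hδ, hQsph⟩ : ∃ δ > 0, ∀ t ∈ ball (0 : ℂ) δ, ∀ z ∈ sphere (0 : ℂ) R,
      eval z (Q t) ≠ 0 := by
    rw [← Metric.eventually_nhds_iff_ball]
    refine (isCompact_sphere 0 R).eventually_forall_of_forall_eventually fun z hz => ?_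
    have hz0 : z ≠ 0 := ne_of_mem_of_not_mem hz (by simp [hR.ne])
    refine ContinuousAt.eventually_ne (g := fun y : ℂ × ℂ => eval y.2 (Q y.1))
      (by simp only [hQ, eval_add, eval_mul, eval_C, eval_neg, eval_pow, eval_X]; fun_prop) ?_
    simpa [hQ] using pow_ne_zero p hz0
  have hQ0 : ∀ t ∈ ball (0 : ℂ) δ, Multiset.card ((Q t).roots.filter (· ∈ ball 0 R)) = p := by
    intro t ht
    rw [(convex_ball 0 δ).isPreconnected.card_roots_filter_mem_ball_eq _ _ hR.le hQsph ht
      (mem_ball_self hδ)]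
    simp [Multiset.filter_nsmul, Multiset.filter_singleton, hR]
  obtain ⟨v, hvU, hv⟩ : ∃ v ∈ U, δ⁻¹ < ‖v‖ := by
    by_contra! h
    exact hUb ((isBounded_closedBall (x := (0 : ℂ)) (r := δ⁻¹)).subset fun v hv => by
      simpa using h v hv)
  have hv0 : v ≠ 0 := norm_pos_iff.mp ((inv_pos.mpr hδ).trans hv)
  have hPQ : C v * X ^ p - A = C v * Q v⁻¹ := by
    rw [hQ, mul_add, ← mul_assoc, ← C_mul, mul_inv_cancel₀ hv0, C_1]; ring
  calc Multiset.card ((C w * X ^ p - A).roots.filter (· ∈ ball 0 R))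
      = Multiset.card ((C v * X ^ p - A).roots.filter (· ∈ ball 0 R)) := by
        simp only [sub_eq_add_neg] at hsph ⊢
        exact hU.card_roots_filter_mem_ball_eq _ _ hR.le hsph hw hvU
    _ = p := by
        rw [hPQ, roots_C_mul _ hv0]
        exact hQ0 _ (by simpa using inv_lt_of_inv_lt₀ hδ hv)

theorem Multiset.card_filter_one_lt_norm_add_card_filter_mem_ball {s : Multiset ℂ}
    (hs : ∀ κ ∈ s, ‖κ‖ ≠ 1) :
    card (s.filter fun κ => 1 < ‖κ‖) + card (s.filter (· ∈ ball (0 : ℂ) 1)) = card s := by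
  conv_rhs => rw [← filter_add_not (p := (· ∈ ball (0 : ℂ) 1)) s]
  rw [card_add, add_comm]
  congr 2
  refine filter_congr fun κ hκ => ?_
  rw [mem_ball_zero_iff, not_lt, lt_iff_le_and_ne, and_iff_left (hs κ hκ).symm]

theorem Finset.sum_Icc_int_eq_sum_range {M : Type*} [AddCommMonoid M] (f : ℤ → M) (a : ℤ)
    (n : ℕ) :
    ∑ k ∈ Finset.Icc a (a + n), f k = ∑ m ∈ Finset.range (n + 1), f (a + m) := by
  refine Finset.sum_nbij' (fun k => (k - a).toNat) (fun m => a + m) ?_ ?_ ?_ ?_ ?_ <;>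
    intro x hx <;> simp only [Finset.mem_Icc, Finset.mem_range] at hx ⊢ <;>
    first | omega | congr 1; omega

/-- The polynomial `κ ^ p * 𝓕(κ)`. -/
noncomputable def laurentNumerator (lam : ℤ → ℂ) (p q : ℕ) : ℂ[X] :=
  ∑ m ∈ Finset.range (p + q + 1), C (lam (m - p)) * X ^ m

theorem eval_laurentNumerator (lam : ℤ → ℂ) (p q : ℕ) {κ : ℂ} (hκ : κ ≠ 0) :
    eval κ (laurentNumerator lam p q) =
      κ ^ p * ∑ k ∈ Finset.Icc (-(p : ℤ)) q, lam k * κ ^ k := by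
  have hq : (q : ℤ) = -p + (p + q : ℕ) := by push_cast; ring
  rw [hq, Finset.sum_Icc_int_eq_sum_range, laurentNumerator, eval_finsetSum, Finset.mul_sum]
  refine Finset.sum_congr rfl fun m _ => ?_
  rw [zpow_add₀ hκ, zpow_neg, zpow_natCast, zpow_natCast, neg_add_eq_sub]
  simp only [eval_mul, eval_C, eval_pow, eval_X]
  field_simp

theorem zero_notMem_roots_C_mul_X_pow_sub_laurentNumerator {lam : ℤ → ℂ} {p : ℕ}
    (hp : p ≠ 0) (hlam : lam (-p) ≠ 0) (q : ℕ) (w : ℂ) :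
    (0 : ℂ) ∉ (C w * X ^ p - laurentNumerator lam p q).roots := fun h0 => by
  have := isRoot_of_mem_roots h0
  simp [laurentNumerator, eval_finsetSum, Finset.sum_range_succ', zero_pow hp] at this
  exact hlam this

theorem charpoly_eq_C_inv_mul_C_mul_X_pow_sub_laurentNumerator {p q : ℕ} (lam : ℤ → ℂ)
    (z : ℂ) (Λ : ℤ → ℂ) (hΛ : ∀ k, Λ k = (if k = 0 then z else 0) - lam k)
    (M : Matrix (Fin (p + q)) (Fin (p + q)) ℂ)
    (hM : ∀ i j : Fin (p + q), M i j = if (i : ℕ) = 0 then -(Λ q)⁻¹ * Λ (q - 1 - (j : ℕ))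
      else if (i : ℕ) = j + 1 then 1 else 0)
    (hΛq : Λ q ≠ 0) :
    M.charpoly = C (Λ q)⁻¹ * (C z * X ^ p - laurentNumerator lam p q) := by
  set a : ℕ → ℂ := fun m => Λ (m - p)
  have ha : a (p + q) = Λ q := by simp only [a]; congr 1; push_cast; ring
  have hM : M = companionMatrix fun j : Fin (p + q) => -(a (p + q))⁻¹ * a j.rev := by
    ext i j
    have hj : ((j.rev : ℕ) : ℤ) - p = q - 1 - j := by rw [Fin.val_rev]; omega
    simp only [hM, ha, companionMatrix, Matrix.of_apply, a, hj]
  have hsum : ∑ m ∈ Finset.range (p + q + 1), C (a m) * X ^ m =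
      C z * X ^ p - laurentNumerator lam p q := by
    simp only [a, hΛ, map_sub, sub_mul, Finset.sum_sub_distrib, laurentNumerator]
    congr 1
    simp [sub_eq_zero, apply_ite C, ite_mul]
  rw [hM, charpoly_companionMatrix_eq_C_inv_mul a (ha ▸ hΛq), hsum, ha]

theorem stmt6 (p q : ℕ) (hp : 1 ≤ p) (hq : 1 ≤ q)
    (lam : ℤ → ℂ) (hlq : lam (q : ℤ) ≠ 0) (hlmp : lam (-(p : ℤ)) ≠ 0)
    (Λ : ℤ → ℂ → ℂ) (hΛ : ∀ (k : ℤ) (z : ℂ), Λ k z = (if k = 0 then z else 0) - lam k)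
    (M : ℂ → Matrix (Fin (p + q)) (Fin (p + q)) ℂ)
    (hM : ∀ (z : ℂ) (i j : Fin (p + q)), M z i j =
      if (i : ℕ) = 0 then -(Λ (q : ℤ) z)⁻¹ * Λ ((q : ℤ) - 1 - (j : ℕ)) z
      else if (i : ℕ) = (j : ℕ) + 1 then 1 else 0)
    (F : ℂ → ℂ) (hF : ∀ κ : ℂ, F κ = ∑ k ∈ Finset.Icc (-(p : ℤ)) (q : ℤ), lam k * κ ^ k)
    (z : ℂ) (hz1 : z ∉ F '' Metric.sphere (0 : ℂ) 1)
    (hz2 : ¬ Bornology.IsBounded (connectedComponentIn (F '' Metric.sphere (0 : ℂ) 1)ᶜ z)) :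
    (∀ κ ∈ (M z).charpoly.roots, ‖κ‖ ≠ 1) ∧
    Multiset.card ((M z).charpoly.roots.filter fun κ => ‖κ‖ < 1 ∧ κ ≠ 0) = p ∧
    Multiset.card ((M z).charpoly.roots.filter fun κ => 1 < ‖κ‖) = q := by
  set P := C z * X ^ p - laurentNumerator lam p q
  have hΛq : Λ q z = -lam q := by simp [hΛ]; omega
  have hroots : (M z).charpoly.roots = P.roots := by
    rw [charpoly_eq_C_inv_mul_C_mul_X_pow_sub_laurentNumerator lam z (Λ · z) (hΛ · z) (M z)
      (hM z) (by simpa [hΛq] using hlq), roots_C_mul _ (by simpa [hΛq] using hlq)]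
  have hcard : Multiset.card P.roots = p + q := by
    rw [← hroots, splits_iff_card_roots.mp (IsAlgClosed.splits _),
      Matrix.charpoly_natDegree_eq_dim, Fintype.card_fin]
  have hsph : ∀ w ∉ F '' sphere 0 1, ∀ κ ∈ sphere (0 : ℂ) 1,
      eval κ (C w * X ^ p - laurentNumerator lam p q) ≠ 0 := by
    intro w hw κ hκ h
    have hκ0 : κ ≠ 0 := ne_of_mem_of_not_mem hκ (by simp)
    rw [eval_sub, eval_mul, eval_C, eval_pow, eval_X, eval_laurentNumerator lam p q hκ0, ← hF,
      mul_comm w, ← mul_sub, mul_eq_zero, sub_eq_zero] at h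
    exact hw ⟨κ, hκ, (h.resolve_left (pow_ne_zero p hκ0)).symm⟩
  have hnorm : ∀ κ ∈ P.roots, ‖κ‖ ≠ 1 := fun κ hκ h1 =>
    hsph z hz1 κ (by simpa using h1) (isRoot_of_mem_roots hκ)
  have hdisk : Multiset.card (P.roots.filter (· ∈ ball 0 1)) = p :=
    card_roots_C_mul_X_pow_sub_filter_mem_ball_eq _ p one_pos
      isPreconnected_connectedComponentIn hz2
      (fun w hw => hsph w (connectedComponentIn_subset _ _ hw)) (mem_connectedComponentIn hz1)
  rw [hroots]
  refine ⟨hnorm, ?_, ?_⟩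
  · rw [← hdisk]
    congr 1
    refine Multiset.filter_congr fun κ hκ => ?_
    have hκ0 : κ ≠ 0 := ne_of_mem_of_not_mem hκ
      (zero_notMem_roots_C_mul_X_pow_sub_laurentNumerator (by omega) hlmp q z)
    rw [mem_ball_zero_iff, and_iff_left hκ0]
  · have := Multiset.card_filter_one_lt_norm_add_card_filter_mem_ball hnorm
    omega
end

section
/- With the notation of the context, fix z ∈ ℂ. (i) If l ∈ {1,…,d} and ζ ∈ ℂ\{0} satisfies 𝓕_l(ζ) = z, then the vector R ∈ ℂ^{d(p+q)} whose blocks of size d are (ζ^{q−1} r_l, ζ^{q−2} r_l, …, ζ^{−p} r_l) satisfies M(z) R = ζ R. (ii) If for each l ∈ {1,…,d} the numbers ζ_{l,1},…,ζ_{l,p+q} are pairwise distinct nonzero solutions of 𝓕_l(κ) = z, then the d(p+q) vectors R_{l,k} with blocks (ζ_{l,k}^{q−1} r_l, …, ζ_{l,k}^{−p} r_l), for l ∈ {1,…,d} and k ∈ {1,…,p+q}, form a basis of ℂ^{d(p+q)}. -/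
/-!
If `∑ₖ ζᵏ 𝔸ₖ(z) r = 0`, the block companion matrix maps the stacked vector of the `ζᵏ r` to `ζ`
times itself: the subdiagonal identity blocks shift the powers, and the first block row reproduces
`ζ^q r` because `𝔸_q(z)` is invertible. For `r = r_l` the Laurent matrix polynomial acts on `r_l` as
the scalar `z - 𝓕_l(ζ)`. Linear independence splits along the columns of `P`, after which each
column contributes a Vandermonde matrix in the distinct nonzero numbers `ζ_{l,k}⁻¹`.
-/

open Matrix Finset

section CommRing

variable {R ι : Type*} [CommRing R] [DecidableEq ι]

def blockCompanion {n : ℕ} (B : Fin n → Matrix ι ι R) : Matrix (Fin n × ι) (Fin n × ι) R :=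
  fun ia jb => if (ia.1 : ℕ) = 0 then B jb.1 ia.2 jb.2
    else if (ia.1 : ℕ) = jb.1 + 1 then (1 : Matrix ι ι R) ia.2 jb.2 else 0

theorem blockCompanion_mulVec_apply_of_val_eq_zero [Fintype ι] {n : ℕ} (B : Fin n → Matrix ι ι R)
    (v : Fin n × ι → R) {i : Fin n} (hi : (i : ℕ) = 0) (a : ι) :
    (blockCompanion B *ᵥ v) (i, a) = (∑ j, B j *ᵥ fun b => v (j, b)) a := by
  simp only [mulVec, dotProduct, Fintype.sum_prod_type, blockCompanion, hi, if_true,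
    Finset.sum_apply]

theorem blockCompanion_mulVec_apply_of_val_eq_succ [Fintype ι] {n : ℕ} (B : Fin n → Matrix ι ι R)
    (v : Fin n × ι → R) {i j : Fin n} (hij : (i : ℕ) = j + 1) (a : ι) :
    (blockCompanion B *ᵥ v) (i, a) = v (j, a) := by
  have hi : (i : ℕ) ≠ 0 := by omega
  have hj : ∀ j' : Fin n, (i : ℕ) = j' + 1 ↔ j' = j := fun j' => by
    rw [Fin.ext_iff]; omega
  simp [mulVec, dotProduct, Fintype.sum_prod_type, blockCompanion, hi, hj, one_apply]

theorem mulVec_col_of_inv_mul_mul_eq_diagonal [Fintype ι] {P A : Matrix ι ι R} (hP : IsUnit P)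
    {μ : ι → R} (h : P⁻¹ * A * P = diagonal μ) (l : ι) : A *ᵥ P.col l = μ l • P.col l := by
  have hAP : A * P = P * diagonal μ := by
    rw [← h, ← Matrix.mul_assoc, ← Matrix.mul_assoc,
      mul_nonsing_inv _ ((isUnit_iff_isUnit_det P).mp hP), Matrix.one_mul]
  rw [← mulVec_single_one, mulVec_mulVec, hAP, ← mulVec_mulVec, diagonal_mulVec_single,
    mulVec_single]
  ext a
  simp [mul_comm]

end CommRing

theorem sum_fin_add_eq_sum_Icc {M : Type*} [AddCommMonoid M] (p q : ℕ) (f : ℤ → M) :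
    ∑ j : Fin (p + q), f (q - 1 - (j : ℕ)) = ∑ k ∈ Icc (-(p : ℤ)) (q - 1), f k := by
  rw [Fin.sum_univ_eq_sum_range (fun j => f ((q : ℤ) - 1 - j))]
  refine Finset.sum_nbij' (fun j => (q : ℤ) - 1 - j) (fun k => ((q : ℤ) - 1 - k).toNat)
    ?_ ?_ ?_ ?_ (fun _ _ => rfl) <;> intro x hx <;> simp only [mem_range, mem_Icc] at hx ⊢ <;> omega

section Field

variable {K ι : Type*} [Field K]

def blockPowerVec (n : ℕ) (q : ℤ) (ζ : K) (r : ι → K) : Fin n × ι → K :=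
  fun ia => ζ ^ (q - 1 - (ia.1 : ℕ)) * r ia.2

theorem blockCompanion_mulVec_blockPowerVec [Fintype ι] [DecidableEq ι] {p q : ℕ}
    {𝔸 : ℤ → Matrix ι ι K} (h𝔸q : IsUnit (𝔸 q)) {ζ : K} (hζ : ζ ≠ 0) {r : ι → K}
    (hr : ∑ k ∈ Icc (-(p : ℤ)) q, ζ ^ k • (𝔸 k *ᵥ r) = 0) :
    blockCompanion (fun j : Fin (p + q) => -((𝔸 q)⁻¹ * 𝔸 (q - 1 - (j : ℕ)))) *ᵥ
        blockPowerVec (p + q) q ζ r = ζ • blockPowerVec (p + q) q ζ r := by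
  have hsplit : Icc (-(p : ℤ)) q = insert (q : ℤ) (Icc (-(p : ℤ)) (q - 1)) := by
    ext k; simp only [mem_Icc, mem_insert]; omega
  have hq_notMem : (q : ℤ) ∉ Icc (-(p : ℤ)) (q - 1) := by simp
  have hlow : ∑ k ∈ Icc (-(p : ℤ)) (q - 1), ζ ^ k • (𝔸 k *ᵥ r) = -(𝔸 q *ᵥ ζ ^ (q : ℤ) • r) := by
    rw [hsplit, sum_insert hq_notMem, add_comm] at hr
    rw [eq_neg_of_add_eq_zero_left hr, mulVec_smul]
  have hfirst : ∑ j : Fin (p + q), -((𝔸 q)⁻¹ * 𝔸 (q - 1 - (j : ℕ))) *ᵥ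
      ζ ^ ((q : ℤ) - 1 - (j : ℕ)) • r = ζ ^ (q : ℤ) • r := by
    have hterm : ∀ k : ℤ, -((𝔸 q)⁻¹ * 𝔸 k) *ᵥ ζ ^ k • r = -((𝔸 q)⁻¹ *ᵥ ζ ^ k • (𝔸 k *ᵥ r)) :=
      fun k => by rw [neg_mulVec, ← mulVec_mulVec, mulVec_smul]
    rw [sum_congr rfl fun j _ => hterm _, sum_neg_distrib, ← mulVec_sum,
      sum_fin_add_eq_sum_Icc p q (fun k => ζ ^ k • (𝔸 k *ᵥ r)), hlow, mulVec_neg, neg_neg,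
      mulVec_mulVec, nonsing_inv_mul _ ((isUnit_iff_isUnit_det _).mp h𝔸q), one_mulVec]
  ext ⟨i, a⟩
  by_cases hi : (i : ℕ) = 0
  · rw [blockCompanion_mulVec_apply_of_val_eq_zero _ _ hi]
    refine (congrFun hfirst a).trans ?_
    simp only [blockPowerVec, Pi.smul_apply, smul_eq_mul, hi, ← mul_assoc, ← zpow_one_add₀ hζ]
    ring_nf
  · rw [blockCompanion_mulVec_apply_of_val_eq_succ _ _ (j := ⟨i - 1, by omega⟩) (by simp; omega)]
    simp only [blockPowerVec, Pi.smul_apply, smul_eq_mul, ← mul_assoc, ← zpow_one_add₀ hζ]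
    congr 2
    push_cast [Nat.one_le_iff_ne_zero.mpr hi]
    ring

theorem linearIndependent_zpow_sub {n : ℕ} (q : ℤ) {ζ : Fin n → K} (hζ0 : ∀ k, ζ k ≠ 0)
    (hζ : Function.Injective ζ) :
    LinearIndependent K (fun k (i : Fin n) => ζ k ^ (q - 1 - (i : ℕ))) := by
  have hvdm : LinearIndependent K (vandermonde fun k => (ζ k)⁻¹).row :=
    linearIndependent_rows_iff_isUnit.mpr <| (isUnit_iff_isUnit_det _).mpr <|
      isUnit_iff_ne_zero.mpr <| det_vandermonde_ne_zero_iff.mpr (inv_injective.comp hζ)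
  convert hvdm.units_smul fun k => Units.mk0 (ζ k ^ (q - 1)) (zpow_ne_zero _ (hζ0 k)) using 1
  ext k i
  simp [vandermonde, zpow_sub₀ (hζ0 k), div_eq_mul_inv, Units.smul_def, mul_assoc]

theorem linearIndependent_outerProduct {κ ν μ : Type*} [Fintype κ] [Fintype ν]
    {u : κ → ν → μ → K} {r : κ → ι → K} (hu : ∀ l, LinearIndependent K (u l))
    (hr : LinearIndependent K r) :
    LinearIndependent K fun lk : κ × ν => fun ia : μ × ι => u lk.1 lk.2 ia.1 * r lk.1 ia.2 := by
  rw [Fintype.linearIndependent_iff]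
  intro g hg ⟨l, k⟩
  have hcoeff : ∀ i l, ∑ k, g (l, k) * u l k i = 0 := by
    intro i
    refine Fintype.linearIndependent_iff.mp hr _ (funext fun a => ?_)
    have := congrFun hg (i, a)
    simp only [Fintype.sum_prod_type, Finset.sum_apply, Pi.smul_apply, smul_eq_mul,
      Finset.sum_mul, mul_assoc] at this ⊢
    simpa only [Pi.zero_apply] using this
  exact Fintype.linearIndependent_iff.mp (hu l) (g ⟨l, ·⟩)
    (funext fun i => by simpa [Finset.sum_apply] using hcoeff i l) k

end Field

theorem stmt8_general (d p q : ℕ) (hq : 1 ≤ q)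
    (P : Matrix (Fin d) (Fin d) ℂ) (hP : IsUnit P)
    (A : ℤ → Matrix (Fin d) (Fin d) ℂ) (lam : Fin d → ℤ → ℂ)
    (hdiag : ∀ k : ℤ, -(p : ℤ) ≤ k → k ≤ (q : ℤ) →
      P⁻¹ * A k * P = Matrix.diagonal (fun l => lam l k))
    (hAq : IsUnit (A (q : ℤ)))
    (𝔸 : ℤ → ℂ → Matrix (Fin d) (Fin d) ℂ)
    (h𝔸 : ∀ (k : ℤ) (z : ℂ),
      𝔸 k z = (if k = 0 then z else 0) • (1 : Matrix (Fin d) (Fin d) ℂ) - A k)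
    (M : ℂ → Matrix (Fin (p + q) × Fin d) (Fin (p + q) × Fin d) ℂ)
    (hM : ∀ (z : ℂ) (i : Fin (p + q)) (a : Fin d) (j : Fin (p + q)) (b : Fin d),
      M z (i, a) (j, b) =
        if (i : ℕ) = 0 then (-((𝔸 (q : ℤ) z)⁻¹ * 𝔸 ((q : ℤ) - 1 - (j : ℕ)) z)) a b
        else if (i : ℕ) = (j : ℕ) + 1 then (if a = b then 1 else 0) else 0)
    (F : Fin d → ℂ → ℂ)
    (hF : ∀ (l : Fin d) (κ : ℂ), F l κ = ∑ k ∈ Finset.Icc (-(p : ℤ)) (q : ℤ), lam l k * κ ^ k)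
    (z : ℂ) :
    (∀ (l : Fin d) (ζ : ℂ), ζ ≠ 0 → F l ζ = z →
      (M z).mulVec (fun ia : Fin (p + q) × Fin d => ζ ^ ((q : ℤ) - 1 - (ia.1 : ℕ)) * P ia.2 l) =
        ζ • (fun ia : Fin (p + q) × Fin d => ζ ^ ((q : ℤ) - 1 - (ia.1 : ℕ)) * P ia.2 l)) ∧
    (∀ ζ : Fin d → Fin (p + q) → ℂ,
      (∀ l k, ζ l k ≠ 0) → (∀ l k, F l (ζ l k) = z) → (∀ l, Function.Injective (ζ l)) →
      LinearIndependent ℂ (fun lk : Fin d × Fin (p + q) =>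
        (fun ia : Fin (p + q) × Fin d =>
          (ζ lk.1 lk.2) ^ ((q : ℤ) - 1 - (ia.1 : ℕ)) * P ia.2 lk.1)) ∧
      Submodule.span ℂ (Set.range (fun lk : Fin d × Fin (p + q) =>
        (fun ia : Fin (p + q) × Fin d =>
          (ζ lk.1 lk.2) ^ ((q : ℤ) - 1 - (ia.1 : ℕ)) * P ia.2 lk.1))) = ⊤) := by
  refine ⟨fun l ζ hζ hFζ => ?_, fun ζ hζ0 _ hζ => ?_⟩
  · have hMz :
        M z = blockCompanion fun j : Fin (p + q) => -((𝔸 q z)⁻¹ * 𝔸 (q - 1 - (j : ℕ)) z) := by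
      ext ⟨i, a⟩ ⟨j, b⟩
      rw [hM, blockCompanion, one_apply]
    have h𝔸q : IsUnit (𝔸 q z) := by
      rw [h𝔸, if_neg (by omega), zero_smul, zero_sub]
      exact hAq.neg
    have hker : ∑ k ∈ Icc (-(p : ℤ)) q, ζ ^ k • (𝔸 k z *ᵥ P.col l) = 0 := by
      have hcol : ∀ k ∈ Icc (-(p : ℤ)) q,
          ζ ^ k • (𝔸 k z *ᵥ P.col l) = (ζ ^ k * ((if k = 0 then z else 0) - lam l k)) • P.col l :=
        fun k hk => by
          rw [mem_Icc] at hk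
          rw [h𝔸, sub_mulVec, smul_mulVec, one_mulVec,
            mulVec_col_of_inv_mul_mul_eq_diagonal hP (hdiag k hk.1 hk.2), ← sub_smul, smul_smul]
      rw [sum_congr rfl hcol, ← sum_smul]
      simp only [mul_sub, mul_ite, mul_zero, sum_sub_distrib, sum_ite_eq', hF] at hFζ ⊢
      simp [hFζ, mul_comm]
    rw [hMz]
    exact blockCompanion_mulVec_blockPowerVec (𝔸 := (𝔸 · z)) h𝔸q hζ hker
  · have hli := linearIndependent_outerProduct
      (fun l => linearIndependent_zpow_sub q (hζ0 l) (hζ l))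
      (linearIndependent_cols_iff_isUnit.mpr hP)
    exact ⟨hli, hli.span_eq_top_of_card_eq_finrank' (by simp [mul_comm])⟩

theorem stmt8 (d p q : ℕ) (hd : 1 ≤ d) (hp : 1 ≤ p) (hq : 1 ≤ q)
    (P : Matrix (Fin d) (Fin d) ℂ) (hP : IsUnit P)
    (A : ℤ → Matrix (Fin d) (Fin d) ℂ) (lam : Fin d → ℤ → ℂ)
    (hdiag : ∀ k : ℤ, -(p : ℤ) ≤ k → k ≤ (q : ℤ) →
      P⁻¹ * A k * P = Matrix.diagonal (fun l => lam l k))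
    (hAq : IsUnit (A (q : ℤ))) (hAmp : IsUnit (A (-(p : ℤ))))
    (𝔸 : ℤ → ℂ → Matrix (Fin d) (Fin d) ℂ)
    (h𝔸 : ∀ (k : ℤ) (z : ℂ),
      𝔸 k z = (if k = 0 then z else 0) • (1 : Matrix (Fin d) (Fin d) ℂ) - A k)
    (M : ℂ → Matrix (Fin (p + q) × Fin d) (Fin (p + q) × Fin d) ℂ)
    (hM : ∀ (z : ℂ) (i : Fin (p + q)) (a : Fin d) (j : Fin (p + q)) (b : Fin d),
      M z (i, a) (j, b) =
        if (i : ℕ) = 0 then (-((𝔸 (q : ℤ) z)⁻¹ * 𝔸 ((q : ℤ) - 1 - (j : ℕ)) z)) a b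
        else if (i : ℕ) = (j : ℕ) + 1 then (if a = b then 1 else 0) else 0)
    (F : Fin d → ℂ → ℂ)
    (hF : ∀ (l : Fin d) (κ : ℂ), F l κ = ∑ k ∈ Finset.Icc (-(p : ℤ)) (q : ℤ), lam l k * κ ^ k)
    (z : ℂ) :
    (∀ (l : Fin d) (ζ : ℂ), ζ ≠ 0 → F l ζ = z →
      (M z).mulVec (fun ia : Fin (p + q) × Fin d => ζ ^ ((q : ℤ) - 1 - (ia.1 : ℕ)) * P ia.2 l) =
        ζ • (fun ia : Fin (p + q) × Fin d => ζ ^ ((q : ℤ) - 1 - (ia.1 : ℕ)) * P ia.2 l)) ∧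
    (∀ ζ : Fin d → Fin (p + q) → ℂ,
      (∀ l k, ζ l k ≠ 0) → (∀ l k, F l (ζ l k) = z) → (∀ l, Function.Injective (ζ l)) →
      LinearIndependent ℂ (fun lk : Fin d × Fin (p + q) =>
        (fun ia : Fin (p + q) × Fin d =>
          (ζ lk.1 lk.2) ^ ((q : ℤ) - 1 - (ia.1 : ℕ)) * P ia.2 lk.1)) ∧
      Submodule.span ℂ (Set.range (fun lk : Fin d × Fin (p + q) =>
        (fun ia : Fin (p + q) × Fin d =>
          (ζ lk.1 lk.2) ^ ((q : ℤ) - 1 - (ia.1 : ℕ)) * P ia.2 lk.1))) = ⊤) :=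
  stmt8_general d p q hq P hP A lam hdiag hAq 𝔸 h𝔸 M hM F hF z
end

section
/- With the notation of the context, fix z ∈ ℂ and assume that for each l ∈ {1,…,d} the equation 𝓕_l(κ) = z has p+q pairwise distinct nonzero solutions ζ_{l,1},…,ζ_{l,p+q}, so that the vectors R_{l,k} ∈ ℂ^{d(p+q)} with blocks (ζ_{l,k}^{q−1} r_l, …, ζ_{l,k}^{−p} r_l) form a basis of ℂ^{d(p+q)}. Let (L_{l,k}) be the dual basis, i.e. L_{l,k}^T R_{l′,k′} = δ_{(l,k),(l′,k′)}. Then for each pair (l,k): 𝓕_l′(ζ_{l,k}) ≠ 0; writing L_{l,k} as p+q consecutive blocks of size d, each block is a scalar multiple of the vector l_l (the l-th member of the dual basis to (r_1,…,r_d), i.e. the l-th column of (P^{−1})^T); and the first block of L_{l,k} equals (λ_{l,q}/𝓕_l′(ζ_{l,k})) · l_l. -/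
/-!
Pair the row `L (l, k)` block by block with the columns `r_{l'}` of `P`. After multiplying by
`ζ ^ p`, the duality relations say that the polynomial of degree `< p + q` whose coefficients
are these pairings takes the values `ζ_{l,k} ^ p δ_{k k'}` at the nodes `ζ_{l', k'}` when
`l' = l`, and vanishes at all nodes otherwise. For `l' ≠ l` it is therefore zero, so every block
is a multiple of the `l`-th row of `P⁻¹`. For `l' = l` it is a multiple of a Lagrange basis
polynomial, whose leading coefficient is `ζ_{l,k} ^ p / N'(ζ_{l,k})` with `N` the nodal
polynomial of the `ζ_{l, ·}`. Finally `X ^ p (𝓕_l - z)` is a polynomial of degree `p + q` with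
leading coefficient `λ_{l,q}` and these roots, so it equals `λ_{l,q} N`; differentiating at
`ζ_{l,k}` gives `ζ_{l,k} ^ p 𝓕_l'(ζ_{l,k}) = λ_{l,q} N'(ζ_{l,k}) ≠ 0`.
-/

open Polynomial Finset Matrix

namespace Polynomial

variable {R : Type*} [Semiring R] {n : ℕ}

noncomputable def ofCoeffsDesc (c : Fin n → R) : R[X] :=
  ∑ i, C (c i) * X ^ (i.rev : ℕ)

theorem ofCoeffsDesc_eq_sum_rev (c : Fin n → R) :
    ofCoeffsDesc c = ∑ i : Fin n, C (c i.rev) * X ^ (i : ℕ) :=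
  (Fintype.sum_equiv Fin.revPerm _ _ fun i => by simp).symm

theorem degree_ofCoeffsDesc_lt (c : Fin n → R) : (ofCoeffsDesc c).degree < n := by
  rw [ofCoeffsDesc_eq_sum_rev]
  exact degree_sum_fin_lt _

theorem coeff_ofCoeffsDesc_rev (c : Fin n → R) (j : Fin n) :
    (ofCoeffsDesc c).coeff (j.rev : ℕ) = c j := by
  rw [ofCoeffsDesc_eq_sum_rev, finsetSum_coeff, Finset.sum_eq_single j.rev]
  · simp
  · intro i _ hi
    rw [coeff_C_mul_X_pow, if_neg (Fin.val_injective.ne hi).symm]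
  · simp

theorem eval_ofCoeffsDesc {R : Type*} [CommSemiring R] (c : Fin n → R) (x : R) :
    (ofCoeffsDesc c).eval x = ∑ i, c i * x ^ (i.rev : ℕ) := by
  simp [ofCoeffsDesc, eval_finsetSum]

section Interpolation

variable {K : Type*} [Field K] {ι : Type*} [Fintype ι] {x : ι → K}

theorem coeff_card_sub_one_of_eval_eq_ite [DecidableEq ι] (hx : Function.Injective x)
    {V : K[X]} (hV : V.degree < Fintype.card ι) {k : ι} {c : K}
    (hVx : ∀ j, V.eval (x j) = if k = j then c else 0) :
    V.coeff (Fintype.card ι - 1) = c / (derivative (Lagrange.nodal univ x)).eval (x k) := by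
  rw [← card_univ, Lagrange.coeff_eq_sum hx.injOn hV, Finset.sum_eq_single k, hVx, if_pos rfl,
    Lagrange.eval_nodal_derivative_eval_node_eq (mem_univ k), Lagrange.eval_nodal]
  · intro j _ hj
    rw [hVx, if_neg (Ne.symm hj), zero_div]
  · simp

theorem eval_derivative_nodal_ne_zero [DecidableEq ι] (hx : Function.Injective x) (k : ι) :
    (derivative (Lagrange.nodal univ x)).eval (x k) ≠ 0 := by
  have h := Lagrange.nodalWeight_ne_zero hx.injOn (mem_univ k)
  rwa [Lagrange.nodalWeight_eq_eval_derivative_nodal (mem_univ k), ne_eq, inv_eq_zero] at h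

theorem eq_C_mul_nodal_of_eval_eq_zero (hx : Function.Injective x) {S : K[X]}
    (hS : S.natDegree ≤ Fintype.card ι) (hSx : ∀ j, S.eval (x j) = 0) :
    S = C (S.coeff (Fintype.card ι)) * Lagrange.nodal univ x := by
  refine eq_of_degree_sub_lt_of_eval_index_eq univ hx.injOn ?_ fun j _ => ?_
  · rw [card_univ, degree_lt_iff_coeff_zero]
    intro m hm
    rcases hm.lt_or_eq with hm | rfl
    · have hSm : S.coeff m = 0 := coeff_eq_zero_of_natDegree_lt (hS.trans_lt hm)
      have hxm : (Lagrange.nodal univ x).coeff m = 0 :=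
        coeff_eq_zero_of_natDegree_lt (by rwa [Lagrange.natDegree_nodal, card_univ])
      rw [coeff_sub, coeff_C_mul, hSm, hxm, mul_zero, sub_zero]
    · rw [coeff_sub, coeff_C_mul, ← card_univ, ← Lagrange.natDegree_nodal (v := x),
        Lagrange.nodal_monic.coeff_natDegree, Lagrange.natDegree_nodal, mul_one, sub_self]
  · rw [hSx, eval_mul, Lagrange.eval_nodal_at_node (mem_univ j), mul_zero]

end Interpolation

end Polynomial

theorem Matrix.eq_vecMul_apply_mul_inv_of_vecMul_eq_zero {K : Type*} [CommRing K] {m : Type*}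
    [Fintype m] [DecidableEq m] {P : Matrix m m K} (hP : IsUnit P) {w : m → K} {l : m}
    (hw : ∀ l', l' ≠ l → (w ᵥ* P) l' = 0) (a : m) :
    w a = (w ᵥ* P) l * P⁻¹ l a := by
  have hinv : w = (w ᵥ* P) ᵥ* P⁻¹ := by
    rw [vecMul_vecMul, mul_nonsing_inv P ((isUnit_iff_isUnit_det P).mp hP), vecMul_one]
  conv_lhs => rw [hinv]
  rw [vecMul, dotProduct,
    Finset.sum_eq_single l (fun l' _ h => by rw [hw l' h, zero_mul]) (by simp)]

section Blocks

variable {K : Type*} [Field K] {n d : ℕ}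

noncomputable def blockPairingPoly (w : Fin n × Fin d → K) (P : Matrix (Fin d) (Fin d) K)
    (l : Fin d) : K[X] :=
  ofCoeffsDesc fun i => ((fun a => w (i, a)) ᵥ* P) l

theorem eval_blockPairingPoly {p q : ℕ} {x : K} (hx : x ≠ 0) (w : Fin (p + q) × Fin d → K)
    (P : Matrix (Fin d) (Fin d) K) (l : Fin d) :
    (blockPairingPoly w P l).eval x =
      (∑ ia : Fin (p + q) × Fin d, w ia * (x ^ ((q : ℤ) - 1 - (ia.1 : ℕ)) * P ia.2 l)) * x ^ p := by
  rw [blockPairingPoly, eval_ofCoeffsDesc, Fintype.sum_prod_type, Finset.sum_mul]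
  refine Finset.sum_congr rfl fun i _ => ?_
  have hpow : x ^ ((q : ℤ) - 1 - (i : ℕ)) * x ^ p = x ^ (i.rev : ℕ) := by
    rw [← zpow_natCast x p, ← zpow_add₀ hx, ← zpow_natCast, Fin.val_rev]
    congr 1
    omega
  rw [vecMul, dotProduct, Finset.sum_mul, Finset.sum_mul]
  refine Finset.sum_congr rfl fun a _ => ?_
  rw [← hpow]
  ring

theorem degree_blockPairingPoly_lt (w : Fin n × Fin d → K) (P : Matrix (Fin d) (Fin d) K)
    (l : Fin d) : (blockPairingPoly w P l).degree < Fintype.card (Fin n) := by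
  rw [Fintype.card_fin]
  exact degree_ofCoeffsDesc_lt _

theorem eq_coeff_blockPairingPoly_mul_inv {P : Matrix (Fin d) (Fin d) K} (hP : IsUnit P)
    {ζ : Fin d → Fin n → K} (hinj : ∀ l, Function.Injective (ζ l)) {w : Fin n × Fin d → K}
    {l : Fin d} (hw : ∀ l', l' ≠ l → ∀ k', (blockPairingPoly w P l').eval (ζ l' k') = 0)
    (i : Fin n) (a : Fin d) :
    w (i, a) = (blockPairingPoly w P l).coeff i.rev * P⁻¹ l a := by
  rw [blockPairingPoly, coeff_ofCoeffsDesc_rev]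
  refine Matrix.eq_vecMul_apply_mul_inv_of_vecMul_eq_zero (w := fun a => w (i, a)) hP
    (fun l' hl' => ?_) a
  have hzero := eq_zero_of_degree_lt_of_eval_index_eq_zero univ (hinj l').injOn
    (by simpa using degree_blockPairingPoly_lt w P l') fun k' _ => hw l' hl' k'
  have hcoeff := coeff_ofCoeffsDesc_rev (fun i => ((fun a => w (i, a)) ᵥ* P) l') i
  rw [← blockPairingPoly, hzero, coeff_zero] at hcoeff
  exact hcoeff.symm

end Blocks

section LaurentPolynomial

variable {𝕜 : Type*} [NontriviallyNormedField 𝕜] (lam : ℤ → 𝕜) (p q : ℕ) (z : 𝕜)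

noncomputable def laurentClearedPoly : 𝕜[X] :=
  ∑ j ∈ Icc (-(p : ℤ)) q, C (lam j) * X ^ (j + p).toNat - C z * X ^ p

theorem eval_laurentClearedPoly {x : 𝕜} (hx : x ≠ 0) :
    (laurentClearedPoly lam p q z).eval x =
      x ^ p * (∑ j ∈ Icc (-(p : ℤ)) q, lam j * x ^ j - z) := by
  have hterm : ∀ j ∈ Icc (-(p : ℤ)) q, lam j * x ^ (j + p).toNat = x ^ p * (lam j * x ^ j) := by
    intro j hj
    rw [← zpow_natCast, Int.toNat_of_nonneg (by grind), zpow_add₀ hx, zpow_natCast]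
    ring
  simp only [laurentClearedPoly, eval_sub, eval_finsetSum, eval_mul, eval_C, eval_pow, eval_X]
  rw [Finset.sum_congr rfl hterm, ← Finset.mul_sum]
  ring

theorem natDegree_laurentClearedPoly_le : (laurentClearedPoly lam p q z).natDegree ≤ p + q := by
  refine (natDegree_sub_le _ _).trans (max_le ?_ ?_)
  · refine natDegree_sum_le_of_forall_le _ _ fun j hj => (natDegree_C_mul_X_pow_le _ _).trans ?_
    grind
  · exact (natDegree_C_mul_X_pow_le _ _).trans (by omega)

theorem coeff_laurentClearedPoly_add (hq : 1 ≤ q) :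
    (laurentClearedPoly lam p q z).coeff (p + q) = lam q := by
  rw [laurentClearedPoly, coeff_sub, finsetSum_coeff, Finset.sum_eq_single (q : ℤ),
    coeff_C_mul_X_pow, coeff_C_mul_X_pow, if_pos (by omega), if_neg (by omega), sub_zero]
  · intro j hj hjq
    rw [coeff_C_mul_X_pow, if_neg (by grind)]
  · intro h
    exact absurd (Finset.mem_Icc.mpr (by omega)) h

theorem eval_derivative_laurentClearedPoly {F : 𝕜 → 𝕜}
    (hF : ∀ κ, F κ = ∑ j ∈ Icc (-(p : ℤ)) q, lam j * κ ^ j) {x : 𝕜} (hx : x ≠ 0) (hFx : F x = z) :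
    (derivative (laurentClearedPoly lam p q z)).eval x = x ^ p * deriv F x := by
  have hFdiff : DifferentiableAt 𝕜 F x := by
    rw [show F = fun κ => ∑ j ∈ Icc (-(p : ℤ)) q, lam j * κ ^ j from funext hF]
    exact DifferentiableAt.fun_sum fun j _ =>
      (hasDerivAt_zpow j x (Or.inl hx)).differentiableAt.const_mul (lam j)
  have hnear : (fun y => (laurentClearedPoly lam p q z).eval y) =ᶠ[nhds x]
      fun y => y ^ p * (F y - z) := by
    filter_upwards [isOpen_ne.mem_nhds hx] with y hy
    rw [eval_laurentClearedPoly lam p q z hy, hF]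
  have hderiv := ((hasDerivAt_pow p x).fun_mul (hFdiff.hasDerivAt.sub_const z)).deriv
  rw [← Polynomial.deriv, hnear.deriv_eq, hderiv, hFx]
  ring

theorem pow_mul_deriv_eq_mul_eval_derivative_nodal {lam : ℤ → 𝕜} {p q : ℕ} (hq : 1 ≤ q)
    {F : 𝕜 → 𝕜} (hF : ∀ κ, F κ = ∑ j ∈ Icc (-(p : ℤ)) q, lam j * κ ^ j) {z : 𝕜}
    {ζ : Fin (p + q) → 𝕜} (hζ0 : ∀ k, ζ k ≠ 0) (hζF : ∀ k, F (ζ k) = z)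
    (hinj : Function.Injective ζ) (k : Fin (p + q)) :
    ζ k ^ p * deriv F (ζ k) = lam q * (derivative (Lagrange.nodal univ ζ)).eval (ζ k) := by
  have hS := eq_C_mul_nodal_of_eval_eq_zero hinj (S := laurentClearedPoly lam p q z)
    (by simpa using natDegree_laurentClearedPoly_le lam p q z)
    fun k => by rw [eval_laurentClearedPoly lam p q z (hζ0 k), ← hF, hζF, sub_self, mul_zero]
  rw [Fintype.card_fin, coeff_laurentClearedPoly_add lam p q z hq] at hS
  rw [← eval_derivative_laurentClearedPoly lam p q z hF (hζ0 k) (hζF k), hS, derivative_C_mul,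
    eval_mul, eval_C]

end LaurentPolynomial

theorem stmt9_general (d p q : ℕ) (hq : 1 ≤ q)
    (P : Matrix (Fin d) (Fin d) ℂ) (hP : IsUnit P)
    (lam : Fin d → ℤ → ℂ)
    (hlq : ∀ l, lam l (q : ℤ) ≠ 0)
    (F : Fin d → ℂ → ℂ)
    (hF : ∀ (l : Fin d) (κ : ℂ), F l κ = ∑ k ∈ Finset.Icc (-(p : ℤ)) (q : ℤ), lam l k * κ ^ k)
    (z : ℂ) (ζ : Fin d → Fin (p + q) → ℂ)
    (hζ0 : ∀ l k, ζ l k ≠ 0) (hζF : ∀ l k, F l (ζ l k) = z)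
    (hinj : ∀ l, Function.Injective (ζ l))
    (R : Fin d × Fin (p + q) → Fin (p + q) × Fin d → ℂ)
    (hR : ∀ (lk : Fin d × Fin (p + q)) (ia : Fin (p + q) × Fin d),
      R lk ia = (ζ lk.1 lk.2) ^ ((q : ℤ) - 1 - (ia.1 : ℕ)) * P ia.2 lk.1)
    (L : Fin d × Fin (p + q) → Fin (p + q) × Fin d → ℂ)
    (hdual : ∀ lk lk' : Fin d × Fin (p + q),
      (∑ x : Fin (p + q) × Fin d, L lk x * R lk' x) = if lk = lk' then 1 else 0) :
    ∀ (l : Fin d) (k : Fin (p + q)),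
      deriv (F l) (ζ l k) ≠ 0 ∧
      (∀ i : Fin (p + q), ∃ c : ℂ, ∀ a : Fin d, L (l, k) (i, a) = c * P⁻¹ l a) ∧
      (∀ i : Fin (p + q), (i : ℕ) = 0 →
        ∀ a : Fin d, L (l, k) (i, a) = (lam l (q : ℤ) / deriv (F l) (ζ l k)) * P⁻¹ l a) := by
  intro l k
  have hV : ∀ l' k', (blockPairingPoly (L (l, k)) P l').eval (ζ l' k') =
      if (l, k) = (l', k') then ζ l' k' ^ p else 0 := by
    intro l' k'
    have h := hdual (l, k) (l', k')
    simp only [hR] at h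
    rw [eval_blockPairingPoly (hζ0 l' k'), h, ite_mul, one_mul, zero_mul]
  have hblock := eq_coeff_blockPairingPoly_mul_inv (w := L (l, k)) hP hinj (l := l)
    fun l' hl' k' => by simp [hV, Ne.symm hl']
  have hlead := coeff_card_sub_one_of_eval_eq_ite (hinj l)
    (degree_blockPairingPoly_lt (L (l, k)) P l) (k := k) (c := ζ l k ^ p) fun j => by
      rcases eq_or_ne k j with rfl | h
      · simp [hV]
      · simp [hV, h]
  have hnodal := eval_derivative_nodal_ne_zero (hinj l) k
  have hderiv := pow_mul_deriv_eq_mul_eval_derivative_nodal hq (hF l) (hζ0 l) (hζF l) (hinj l) k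
  have hderiv_ne : deriv (F l) (ζ l k) ≠ 0 :=
    right_ne_zero_of_mul (hderiv ▸ mul_ne_zero (hlq l) hnodal)
  refine ⟨hderiv_ne, fun i => ⟨_, hblock i⟩, fun i hi a => ?_⟩
  rw [Fintype.card_fin] at hlead
  rw [hblock i a, Fin.val_rev, hi, zero_add, hlead]
  congr 1
  rw [div_eq_div_iff hnodal hderiv_ne, hderiv]

theorem stmt9 (d p q : ℕ) (hd : 1 ≤ d) (hp : 1 ≤ p) (hq : 1 ≤ q)
    (P : Matrix (Fin d) (Fin d) ℂ) (hP : IsUnit P)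
    (lam : Fin d → ℤ → ℂ)
    (hlq : ∀ l, lam l (q : ℤ) ≠ 0) (hlmp : ∀ l, lam l (-(p : ℤ)) ≠ 0)
    (F : Fin d → ℂ → ℂ)
    (hF : ∀ (l : Fin d) (κ : ℂ), F l κ = ∑ k ∈ Finset.Icc (-(p : ℤ)) (q : ℤ), lam l k * κ ^ k)
    (z : ℂ) (ζ : Fin d → Fin (p + q) → ℂ)
    (hζ0 : ∀ l k, ζ l k ≠ 0) (hζF : ∀ l k, F l (ζ l k) = z)
    (hinj : ∀ l, Function.Injective (ζ l))
    (R : Fin d × Fin (p + q) → Fin (p + q) × Fin d → ℂ)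
    (hR : ∀ (lk : Fin d × Fin (p + q)) (ia : Fin (p + q) × Fin d),
      R lk ia = (ζ lk.1 lk.2) ^ ((q : ℤ) - 1 - (ia.1 : ℕ)) * P ia.2 lk.1)
    (L : Fin d × Fin (p + q) → Fin (p + q) × Fin d → ℂ)
    (hdual : ∀ lk lk' : Fin d × Fin (p + q),
      (∑ x : Fin (p + q) × Fin d, L lk x * R lk' x) = if lk = lk' then 1 else 0) :
    ∀ (l : Fin d) (k : Fin (p + q)),
      deriv (F l) (ζ l k) ≠ 0 ∧
      (∀ i : Fin (p + q), ∃ c : ℂ, ∀ a : Fin d, L (l, k) (i, a) = c * P⁻¹ l a) ∧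
      (∀ i : Fin (p + q), (i : ℕ) = 0 →
        ∀ a : Fin d, L (l, k) (i, a) = (lam l (q : ℤ) / deriv (F l) (ζ l k)) * P⁻¹ l a) :=
  stmt9_general d p q hq P hP lam hlq F hF z ζ hζ0 hζF hinj R hR L hdual
end

section
/- Let N ≥ 1, let (M_j)_{j∈ℤ} be a sequence of invertible matrices in M_N(ℂ), let (R_m)_{m=1}^N be a basis of ℂ^N, let ζ_1,…,ζ_N ∈ ℂ\{0}, and for each m let (W_m(j))_{j∈ℤ} satisfy W_m(j+1) = M_j W_m(j) for all j ∈ ℤ. Assume there exist C, c > 0 such that |ζ_m^{−j} W_m(j) − R_m| ≤ C e^{−c j} for all m ∈ {1,…,N} and all j ∈ ℕ. Then for every j ∈ ℤ, the family (W_1(j),…,W_N(j)) is a basis of ℂ^N. -/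
/-!
Linear independence of finitely many vectors is an open condition, so the rescaled families
`(ζ_m^{-j} W_m(j))_m`, which converge to the basis `R`, are linearly independent for some `j₀`;
rescaling by nonzero scalars does not affect this, so `(W_m(j₀))_m` is linearly independent.
The invertible transfer matrices `M_j` carry linear independence forwards and backwards in `j`,
and `N` independent vectors in `ℂ^N` form a basis.
-/

open Filter Topology

theorem linearIndependent_of_injective_recurrence {ι R M : Type*} [Ring R] [AddCommGroup M]
    [Module R M] (f : ℤ → M →ₗ[R] M) (hf : ∀ j, Function.Injective (f j))
    (v : ℤ → ι → M) (hv : ∀ j, v (j + 1) = f j ∘ v j) {j₀ : ℤ}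
    (hj₀ : LinearIndependent R (v j₀)) (j : ℤ) : LinearIndependent R (v j) := by
  induction j using Int.inductionOn' (b := j₀) with
  | zero => exact hj₀
  | succ k _ hk => exact hv k ▸ hk.map' (f k) (LinearMap.ker_eq_bot.2 (hf k))
  | pred k _ hk =>
    rw [← sub_add_cancel k 1, hv] at hk
    exact hk.of_comp _

theorem tendsto_const_mul_exp_neg_mul_natCast (C : ℝ) {c : ℝ} (hc : 0 < c) :
    Tendsto (fun n : ℕ => C * Real.exp (-c * n)) atTop (𝓝 0) := by
  simpa using (Real.tendsto_exp_atBot.comp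
    (tendsto_natCast_atTop_atTop.const_mul_atTop_of_neg (neg_lt_zero.2 hc))).const_mul C

theorem stmt12_general (N : ℕ)
    (Mseq : ℤ → Matrix (Fin N) (Fin N) ℂ) (hMseq : ∀ j : ℤ, IsUnit (Mseq j))
    (R : Fin N → Fin N → ℂ)
    (hRli : LinearIndependent ℂ R)
    (ζ : Fin N → ℂ) (hζ : ∀ m, ζ m ≠ 0)
    (W : Fin N → ℤ → Fin N → ℂ)
    (hW : ∀ (m : Fin N) (j : ℤ), W m (j + 1) = (Mseq j).mulVec (W m j))
    (C c : ℝ) (hc : 0 < c)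
    (hdecay : ∀ (m : Fin N) (j : ℕ),
      ‖(ζ m) ^ (-(j : ℤ)) • W m (j : ℤ) - R m‖ ≤ C * Real.exp (-c * j)) :
    ∀ j : ℤ, LinearIndependent ℂ (fun m : Fin N => W m j) ∧
      Submodule.span ℂ (Set.range fun m : Fin N => W m j) = ⊤ := by
  have hlim : Tendsto (fun j : ℕ => fun m => (ζ m) ^ (-(j : ℤ)) • W m j) atTop (𝓝 R) :=
    tendsto_pi_nhds.2 fun m => tendsto_iff_norm_sub_tendsto_zero.2 <|
      squeeze_zero (fun _ => norm_nonneg _) (hdecay m) (tendsto_const_mul_exp_neg_mul_natCast C hc)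
  obtain ⟨j₀, hj₀⟩ := (hlim.eventually hRli.eventually).exists
  have hW₀ : LinearIndependent ℂ (fun m => W m j₀) := by
    rwa [← LinearIndependent.units_smul_iff _
      fun m => Units.mk0 _ (zpow_ne_zero (-(j₀ : ℤ)) (hζ m))]
  intro j
  have hWj := linearIndependent_of_injective_recurrence (fun j => (Mseq j).mulVecLin)
    (fun j => Matrix.mulVec_injective_iff_isUnit.2 (hMseq j)) (fun j m => W m j)
    (fun j => funext fun m => hW m j) hW₀ j
  exact ⟨hWj, hWj.span_eq_top_of_card_eq_finrank' (by simp)⟩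

theorem stmt12 (N : ℕ) (hN : 1 ≤ N)
    (Mseq : ℤ → Matrix (Fin N) (Fin N) ℂ) (hMseq : ∀ j : ℤ, IsUnit (Mseq j))
    (R : Fin N → Fin N → ℂ)
    (hRli : LinearIndependent ℂ R) (hRsp : Submodule.span ℂ (Set.range R) = ⊤)
    (ζ : Fin N → ℂ) (hζ : ∀ m, ζ m ≠ 0)
    (W : Fin N → ℤ → Fin N → ℂ)
    (hW : ∀ (m : Fin N) (j : ℤ), W m (j + 1) = (Mseq j).mulVec (W m j))
    (C c : ℝ) (hC : 0 < C) (hc : 0 < c)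
    (hdecay : ∀ (m : Fin N) (j : ℕ),
      ‖(ζ m) ^ (-(j : ℤ)) • W m (j : ℤ) - R m‖ ≤ C * Real.exp (-c * j)) :
    ∀ j : ℤ, LinearIndependent ℂ (fun m : Fin N => W m j) ∧
      Submodule.span ℂ (Set.range fun m : Fin N => W m j) = ⊤ :=
  stmt12_general N Mseq hMseq R hRli ζ hζ W hW C c hc hdecay
end

section
/- Let μ ≥ 1 be an integer, ε₁ > 0, and let α_1,…,α_m ∈ ℝ\{0}, β_1,…,β_m ∈ ℂ with Re β_i > 0, and ξ_1,…,ξ_m : B(0,ε₁) → ℂ be holomorphic and bounded. For each i set φ_i(τ) := −τ/α_i + (−1)^{μ+1} (β_i / α_i^{2μ+1}) τ^{2μ} and ϖ_i(τ) := φ_i(τ) + τ^{2μ+1} ξ_i(τ). Then there exist ε₂ ∈ (0, ε₁) and constants A_R, A_I > 0 such that for every i: α_i Re(φ_i(τ)) ≤ −Re(τ) + A_R Re(τ)^{2μ} − A_I Im(τ)^{2μ} for all τ ∈ ℂ, and α_i Re(ϖ_i(τ)) + |α_i ξ_i(τ) τ^{2μ+1}| ≤ −Re(τ) + A_R Re(τ)^{2μ}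 − A_I Im(τ)^{2μ} for all τ ∈ B(0,ε₂). -/
/-!
Multiplying by `α` turns `α Re φ(τ)` into `-Re τ + Re(c τ^{2μ})` with `c = (-1)^{μ+1} b` and
`Re b = Re β / α^{2μ} > 0`. On the imaginary axis `c τ^{2μ} = -b (Im τ)^{2μ}`, and the deviation
from that value is `O(|Re τ| (|Re τ| + |Im τ|)^{2μ-1})`; a Young-type splitting bounds it by half of
`Re b (Im τ)^{2μ}` plus a multiple of `(Re τ)^{2μ}`. The perturbation `τ^{2μ+1} ξ(τ)` is of size
`ε · O((Re τ)^{2μ} + (Im τ)^{2μ})` on `B(0, ε)`, so it is absorbed for small `ε`.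

Each bound persists when `A_R` grows and `A_I`, `ε` shrink, so it holds eventually along
`atTop ×ˢ 𝓝[>] 0 ×ˢ 𝓝[>] 0`; finitely many indices then share one choice of constants.
-/

open Filter Topology Metric Complex Set

theorem norm_pow_sub_pow_le {R : Type*} [SeminormedCommRing R] [NormOneClass R] {a b : R} {M : ℝ}
    (ha : ‖a‖ ≤ M) (hb : ‖b‖ ≤ M) (n : ℕ) :
    ‖a ^ n - b ^ n‖ ≤ n * ‖a - b‖ * M ^ (n - 1) := by
  have hM : 0 ≤ M := (norm_nonneg a).trans ha
  have hterm : ∀ i ∈ Finset.range n, ‖a ^ i * b ^ (n - 1 - i)‖ ≤ M ^ (n - 1) := fun i hi => by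
    calc ‖a ^ i * b ^ (n - 1 - i)‖ ≤ ‖a‖ ^ i * ‖b‖ ^ (n - 1 - i) :=
          (norm_mul_le _ _).trans (mul_le_mul (norm_pow_le a i) (norm_pow_le b _)
            (norm_nonneg _) (by positivity))
      _ ≤ M ^ i * M ^ (n - 1 - i) := by gcongr
      _ = M ^ (n - 1) := by rw [← pow_add]; congr 1; have := Finset.mem_range.mp hi; omega
  calc ‖a ^ n - b ^ n‖ ≤ ‖∑ i ∈ Finset.range n, a ^ i * b ^ (n - 1 - i)‖ * ‖a - b‖ := by
        rw [← geom_sum₂_mul]; exact norm_mul_le _ _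
    _ ≤ (n * M ^ (n - 1)) * ‖a - b‖ := by
        gcongr
        simpa using norm_sum_le_of_le _ hterm
    _ = n * ‖a - b‖ * M ^ (n - 1) := by ring

theorem exists_mul_abs_mul_add_abs_pow_le (n : ℕ) {ε : ℝ} (hε : 0 < ε) :
    ∃ C > 0, ∀ x y : ℝ, n * |x| * (|x| + |y|) ^ (n - 1) ≤ ε * |y| ^ n + C * |x| ^ n := by
  cases n with
  | zero => exact ⟨1, one_pos, fun x y => by simp; positivity⟩
  | succ n =>
  set δ : ℝ := min 1 (ε / ((n + 1) * 2 ^ n))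
  have hδ : 0 < δ := by positivity
  refine ⟨(n + 1) * (1 + δ⁻¹) ^ n, by positivity, fun x y => ?_⟩
  push_cast
  rcases le_or_gt |x| (δ * |y|) with h | h
  · have h2 : |x| + |y| ≤ 2 * |y| := by
      nlinarith [min_le_left 1 (ε / ((n + 1) * 2 ^ n)), abs_nonneg y]
    calc (n + 1) * |x| * (|x| + |y|) ^ n ≤ (n + 1) * (δ * |y|) * (2 * |y|) ^ n := by gcongr
      _ = δ * ((n + 1) * 2 ^ n) * |y| ^ (n + 1) := by ring
      _ ≤ ε * |y| ^ (n + 1) := by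
          gcongr
          exact (le_div_iff₀ (by positivity)).1 (min_le_right _ _)
      _ ≤ _ := le_add_of_nonneg_right (by positivity)
  · have h2 : |x| + |y| ≤ (1 + δ⁻¹) * |x| := by
      have : |y| ≤ δ⁻¹ * |x| := by rw [inv_mul_eq_div, le_div_iff₀ hδ]; linarith
      linarith
    calc (n + 1) * |x| * (|x| + |y|) ^ n ≤ (n + 1) * |x| * ((1 + δ⁻¹) * |x|) ^ n := by gcongr
      _ = (n + 1) * (1 + δ⁻¹) ^ n * |x| ^ (n + 1) := by rw [mul_pow]; ring
      _ ≤ _ := le_add_of_nonneg_left (by positivity)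

theorem neg_one_pow_succ_mul_I_mul_pow (μ : ℕ) (b : ℂ) (y : ℝ) :
    (-1) ^ (μ + 1) * b * (I * y) ^ (2 * μ) = -(b * y ^ (2 * μ)) := by
  rw [mul_pow, pow_mul I, I_sq, ← mul_assoc, mul_assoc _ b, mul_comm b, ← mul_assoc, ← pow_add,
    show μ + 1 + μ = 2 * μ + 1 by ring, pow_succ, pow_mul]
  norm_num

theorem exists_re_neg_one_pow_mul_pow_le (μ : ℕ) {b : ℂ} (hb : 0 < b.re) :
    ∃ A_R A_I : ℝ, 0 < A_R ∧ 0 < A_I ∧ ∀ τ : ℂ,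
      ((-1) ^ (μ + 1) * b * τ ^ (2 * μ)).re ≤ A_R * τ.re ^ (2 * μ) - A_I * τ.im ^ (2 * μ) := by
  have hb₀ : 0 < ‖b‖ := hb.trans_le (re_le_norm b)
  obtain ⟨C, hC, hyoung⟩ :=
    exists_mul_abs_mul_add_abs_pow_le (2 * μ) (ε := b.re / 2 / ‖b‖) (by positivity)
  refine ⟨‖b‖ * C, b.re / 2, by positivity, by positivity, fun τ => ?_⟩
  set x := τ.re
  set y := τ.im
  have heven : Even (2 * μ) := even_two_mul μ
  have hdiff : ‖τ ^ (2 * μ) - (I * y) ^ (2 * μ)‖ ≤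
      b.re / 2 / ‖b‖ * y ^ (2 * μ) + C * x ^ (2 * μ) := by
    have hsub : τ - I * y = x := by apply Complex.ext <;> simp [x, y]
    have hIy : ‖I * y‖ ≤ |x| + |y| := by simp
    have := norm_pow_sub_pow_le (norm_le_abs_re_add_abs_im τ) hIy (2 * μ)
    rw [hsub, norm_real, Real.norm_eq_abs] at this
    simpa only [heven.pow_abs] using this.trans (hyoung x y)
  calc ((-1) ^ (μ + 1) * b * τ ^ (2 * μ)).re
      = -(b.re * y ^ (2 * μ)) + ((-1) ^ (μ + 1) * b * (τ ^ (2 * μ) - (I * y) ^ (2 * μ))).re := by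
        rw [mul_sub, sub_re, neg_one_pow_succ_mul_I_mul_pow, neg_re, ← ofReal_pow, re_mul_ofReal]
        ring
    _ ≤ -(b.re * y ^ (2 * μ)) + ‖b‖ * ‖τ ^ (2 * μ) - (I * y) ^ (2 * μ)‖ := by
        gcongr
        refine (re_le_norm _).trans_eq ?_
        simp
    _ ≤ -(b.re * y ^ (2 * μ)) + ‖b‖ * (b.re / 2 / ‖b‖ * y ^ (2 * μ) + C * x ^ (2 * μ)) := by
        gcongr
    _ = ‖b‖ * C * x ^ (2 * μ) - b.re / 2 * y ^ (2 * μ) := by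
        field_simp
        ring

theorem exists_mul_re_neg_div_add_pow_le {α : ℝ} (hα : α ≠ 0) (μ : ℕ) {β : ℂ} (hβ : 0 < β.re) :
    ∃ A_R A_I : ℝ, 0 < A_R ∧ 0 < A_I ∧ ∀ τ : ℂ,
      α * (-τ / α + (-1) ^ (μ + 1) * (β / α ^ (2 * μ + 1)) * τ ^ (2 * μ)).re ≤
        -τ.re + A_R * τ.re ^ (2 * μ) - A_I * τ.im ^ (2 * μ) := by
  have hb : 0 < (β / α ^ (2 * μ)).re := by
    rw [← ofReal_pow, div_ofReal_re]
    exact div_pos hβ ((even_two_mul μ).pow_pos hα)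
  obtain ⟨A_R, A_I, hA_R, hA_I, hle⟩ := exists_re_neg_one_pow_mul_pow_le μ hb
  refine ⟨A_R, A_I, hA_R, hA_I, fun τ => ?_⟩
  have hαC : (α : ℂ) ≠ 0 := ofReal_ne_zero.2 hα
  have hφ : (α : ℂ) * (-τ / α + (-1) ^ (μ + 1) * (β / α ^ (2 * μ + 1)) * τ ^ (2 * μ)) =
      -τ + (-1) ^ (μ + 1) * (β / α ^ (2 * μ)) * τ ^ (2 * μ) := by
    field_simp
    ring
  rw [← re_ofReal_mul, hφ, add_re, neg_re]
  linarith [hle τ]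

theorem norm_pow_succ_le_abs_re_add_abs_im (τ : ℂ) (n : ℕ) :
    ‖τ‖ ^ (n + 1) ≤ ‖τ‖ * 2 ^ (n - 1) * (|τ.re| ^ n + |τ.im| ^ n) := by
  rw [pow_succ', mul_assoc]
  gcongr
  exact (pow_le_pow_left₀ (norm_nonneg τ) (norm_le_abs_re_add_abs_im τ) n).trans
    (add_pow_le (abs_nonneg _) (abs_nonneg _) n)

theorem mul_re_add_norm_le_of_norm_le (α : ℝ) {τ z : ℂ} {ε K : ℝ} (hτ : ‖τ‖ ≤ ε) (hz : ‖z‖ ≤ K)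
    (n : ℕ) : α * (τ ^ (n + 1) * z).re + ‖(α : ℂ) * z * τ ^ (n + 1)‖ ≤
      2 * |α| * K * 2 ^ (n - 1) * ε * (|τ.re| ^ n + |τ.im| ^ n) := by
  have hK : 0 ≤ K := (norm_nonneg z).trans hz
  have hre : α * (τ ^ (n + 1) * z).re ≤ |α| * ‖τ ^ (n + 1) * z‖ :=
    (le_abs_self _).trans (abs_mul α _ ▸ by gcongr; exact abs_re_le_norm _)
  have hnorm : ‖(α : ℂ) * z * τ ^ (n + 1)‖ = |α| * ‖τ ^ (n + 1) * z‖ := by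
    rw [mul_assoc, norm_mul, norm_real, Real.norm_eq_abs, mul_comm z]
  have hw : ‖τ ^ (n + 1) * z‖ ≤ K * (ε * 2 ^ (n - 1) * (|τ.re| ^ n + |τ.im| ^ n)) := by
    rw [norm_mul, norm_pow, mul_comm]
    gcongr
    exact (norm_pow_succ_le_abs_re_add_abs_im τ n).trans (by gcongr)
  calc _ ≤ 2 * |α| * ‖τ ^ (n + 1) * z‖ := by linarith
    _ ≤ 2 * |α| * (K * (ε * 2 ^ (n - 1) * (|τ.re| ^ n + |τ.im| ^ n))) := by gcongr
    _ = _ := by ring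

theorem eventually_mul_re_le_of_bounded {α : ℝ} (hα : α ≠ 0) (μ : ℕ) {β : ℂ} (hβ : 0 < β.re)
    {ξ : ℂ → ℂ} {K : ℝ} (hK : ∀ᶠ τ in 𝓝 0, ‖ξ τ‖ ≤ K) {φ ϖ : ℂ → ℂ}
    (hφ : ∀ τ, φ τ = -τ / α + (-1) ^ (μ + 1) * (β / α ^ (2 * μ + 1)) * τ ^ (2 * μ))
    (hϖ : ∀ τ, ϖ τ = φ τ + τ ^ (2 * μ + 1) * ξ τ) :
    ∀ᶠ A : ℝ × ℝ × ℝ in atTop ×ˢ 𝓝[>] 0 ×ˢ 𝓝[>] 0,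
      (∀ τ, α * (φ τ).re ≤ -τ.re + A.1 * τ.re ^ (2 * μ) - A.2.1 * τ.im ^ (2 * μ)) ∧
      ∀ τ ∈ ball (0 : ℂ) A.2.2, α * (ϖ τ).re + ‖(α : ℂ) * ξ τ * τ ^ (2 * μ + 1)‖ ≤
        -τ.re + A.1 * τ.re ^ (2 * μ) - A.2.1 * τ.im ^ (2 * μ) := by
  obtain ⟨A_R, A_I, -, hA_I, hφle⟩ := exists_mul_re_neg_div_add_pow_le hα μ hβ
  obtain ⟨r, hr, hξr⟩ := eventually_nhds_iff_ball.1 hK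
  set c := 2 * |α| * K * 2 ^ (2 * μ - 1)
  have hsmall : ∀ᶠ ε in 𝓝[>] (0 : ℝ), ε < r ∧ c * ε < A_I / 2 := by
    refine (eventually_lt_nhds hr).and ?_ |>.filter_mono nhdsWithin_le_nhds
    exact (continuous_const_mul c).tendsto' 0 0 (mul_zero c) |>.eventually_lt_const (by positivity)
  filter_upwards [(eventually_ge_atTop (A_R + A_I / 2)).prod_mk
    ((eventually_le_nhds (half_pos hA_I)).filter_mono nhdsWithin_le_nhds |>.prod_mk hsmall)]
  rintro ⟨a_R, a_I, ε⟩ ⟨ha_R, ha_I, hεr, hεc⟩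
  dsimp only at ha_R ha_I hεr hεc ⊢
  have hpow : ∀ x : ℝ, 0 ≤ x ^ (2 * μ) := (even_two_mul μ).pow_nonneg
  have hslack : ∀ τ : ℂ, α * (φ τ).re + A_I / 2 * (τ.re ^ (2 * μ) + τ.im ^ (2 * μ)) ≤
      -τ.re + a_R * τ.re ^ (2 * μ) - a_I * τ.im ^ (2 * μ) := fun τ => by
    rw [hφ]
    nlinarith [hφle τ, hpow τ.re, hpow τ.im]
  refine ⟨fun τ => ?_, fun τ hτ => ?_⟩
  · nlinarith [hslack τ, hpow τ.re, hpow τ.im]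
  have hτε : ‖τ‖ < ε := mem_ball_zero_iff.1 hτ
  have hrem := mul_re_add_norm_le_of_norm_le α hτε.le
    (hξr τ (mem_ball_zero_iff.2 (hτε.trans hεr))) (2 * μ)
  rw [(even_two_mul μ).pow_abs, (even_two_mul μ).pow_abs] at hrem
  have habsorb : c * ε * (τ.re ^ (2 * μ) + τ.im ^ (2 * μ)) ≤
      A_I / 2 * (τ.re ^ (2 * μ) + τ.im ^ (2 * μ)) :=
    mul_le_mul_of_nonneg_right hεc.le (add_nonneg (hpow τ.re) (hpow τ.im))
  rw [hϖ, add_re, mul_add]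
  linarith [hslack τ]

theorem stmt14_general (μ : ℕ) (ε₁ : ℝ) (hε₁ : 0 < ε₁) (m : ℕ)
    (α : Fin m → ℝ) (hα : ∀ i, α i ≠ 0)
    (β : Fin m → ℂ) (hβ : ∀ i, 0 < (β i).re)
    (ξ : Fin m → ℂ → ℂ)
    (hξbdd : ∀ i, ∃ K : ℝ, ∀ τ ∈ Metric.ball (0 : ℂ) ε₁, ‖ξ i τ‖ ≤ K)
    (φ ϖ : Fin m → ℂ → ℂ)
    (hφ : ∀ (i : Fin m) (τ : ℂ),
      φ i τ = -τ / (α i : ℂ) + (-1 : ℂ) ^ (μ + 1) * (β i / (α i : ℂ) ^ (2 * μ + 1)) * τ ^ (2 * μ))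
    (hϖ : ∀ (i : Fin m) (τ : ℂ), ϖ i τ = φ i τ + τ ^ (2 * μ + 1) * ξ i τ) :
    ∃ ε₂ : ℝ, 0 < ε₂ ∧ ε₂ < ε₁ ∧ ∃ A_R A_I : ℝ, 0 < A_R ∧ 0 < A_I ∧
      ∀ i : Fin m,
        (∀ τ : ℂ, α i * (φ i τ).re ≤
          -τ.re + A_R * τ.re ^ (2 * μ) - A_I * τ.im ^ (2 * μ)) ∧
        (∀ τ ∈ Metric.ball (0 : ℂ) ε₂,
          α i * (ϖ i τ).re + ‖(α i : ℂ) * ξ i τ * τ ^ (2 * μ + 1)‖ ≤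
            -τ.re + A_R * τ.re ^ (2 * μ) - A_I * τ.im ^ (2 * μ)) := by
  choose K hK using hξbdd
  have hbounds := eventually_all.2 fun i => eventually_mul_re_le_of_bounded (hα i) μ (hβ i)
    (eventually_of_mem (ball_mem_nhds 0 hε₁) (hK i)) (hφ i) (hϖ i)
  obtain ⟨⟨A_R, A_I, ε₂⟩, hP, hA_R, hA_I, hε₂⟩ := (hbounds.and <| (eventually_gt_atTop 0).prod_mk <|
    (eventually_mem_nhdsWithin (s := Ioi 0)).prod_mk (Ioo_mem_nhdsGT hε₁)).exists
  exact ⟨ε₂, hε₂.1, hε₂.2, A_R, A_I, hA_R, hA_I, hP⟩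

theorem stmt14 (μ : ℕ) (hμ : 1 ≤ μ) (ε₁ : ℝ) (hε₁ : 0 < ε₁) (m : ℕ)
    (α : Fin m → ℝ) (hα : ∀ i, α i ≠ 0)
    (β : Fin m → ℂ) (hβ : ∀ i, 0 < (β i).re)
    (ξ : Fin m → ℂ → ℂ)
    (hξhol : ∀ i, DifferentiableOn ℂ (ξ i) (Metric.ball (0 : ℂ) ε₁))
    (hξbdd : ∀ i, ∃ K : ℝ, ∀ τ ∈ Metric.ball (0 : ℂ) ε₁, ‖ξ i τ‖ ≤ K)
    (φ ϖ : Fin m → ℂ → ℂ)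
    (hφ : ∀ (i : Fin m) (τ : ℂ),
      φ i τ = -τ / (α i : ℂ) + (-1 : ℂ) ^ (μ + 1) * (β i / (α i : ℂ) ^ (2 * μ + 1)) * τ ^ (2 * μ))
    (hϖ : ∀ (i : Fin m) (τ : ℂ), ϖ i τ = φ i τ + τ ^ (2 * μ + 1) * ξ i τ) :
    ∃ ε₂ : ℝ, 0 < ε₂ ∧ ε₂ < ε₁ ∧ ∃ A_R A_I : ℝ, 0 < A_R ∧ 0 < A_I ∧
      ∀ i : Fin m,
        (∀ τ : ℂ, α i * (φ i τ).re ≤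
          -τ.re + A_R * τ.re ^ (2 * μ) - A_I * τ.im ^ (2 * μ)) ∧
        (∀ τ ∈ Metric.ball (0 : ℂ) ε₂,
          α i * (ϖ i τ).re + ‖(α i : ℂ) * ξ i τ * τ ^ (2 * μ + 1)‖ ≤
            -τ.re + A_R * τ.re ^ (2 * μ) - A_I * τ.im ^ (2 * μ)) :=
  stmt14_general μ ε₁ hε₁ m α hα β hβ ξ hξbdd φ ϖ hφ hϖ
end

section
/- Let μ ≥ 1 be an integer, α ∈ ℝ\{0}, ε > 0, A_R, A_I > 0, K > 0, and let φ, ϖ : B(0,ε) → ℂ be functions such that for all τ ∈ B(0,ε): |ϖ(τ) − φ(τ)| ≤ K |τ|^{2μ+1} and α Re(ϖ(τ)) + |α| |ϖ(τ) − φ(τ)| ≤ −Re(τ) + A_R Re(τ)^{2μ} − A_I Im(τ)^{2μ}. Then there exists a constant C > 0 such that for every integer n ≥ 1, every real x ∈ [0, 2n] and every τ ∈ B(0,ε): |e^{x α ϖ(τ)} − e^{x α φ(τ)}| ≤ C n |τ|^{2μ+1} exp( x (−Re(τ) + A_R Re(τ)^{2μ} − A_I Im(τ)^{2μ}) ). 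-/
/-!
Both exponents have real part at most `x R(τ)`, where
`R(τ) = -Re τ + A_R (Re τ)^{2μ} - A_I (Im τ)^{2μ}`: for `ϖ` this is the hypothesis, and for `φ`
the slack `|α| |ϖ - φ|` in it absorbs the change of real part. The mean value inequality for
`exp` on the segment between the exponents then bounds the difference of exponentials by
`e^{x R(τ)} x |α| |ϖ(τ) - φ(τ)| ≤ 2n |α| K |τ|^{2μ+1} e^{x R(τ)}`.
-/

namespace Complex

lemma norm_exp_sub_exp_le_of_re_le {a b : ℂ} {M : ℝ} (ha : a.re ≤ M) (hb : b.re ≤ M) :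
    ‖exp a - exp b‖ ≤ Real.exp M * ‖a - b‖ := by
  refine (convex_segment b a).norm_image_sub_le_of_norm_hasDerivWithin_le
    (fun z _ => (hasDerivAt_exp z).hasDerivWithinAt) ?_
    (left_mem_segment ℝ b a) (right_mem_segment ℝ b a)
  rintro _ ⟨s, t, hs, ht, hst, rfl⟩
  rw [norm_exp, Real.exp_le_exp]
  calc (s • b + t • a).re = s * b.re + t * a.re := by simp
    _ ≤ s * M + t * M := by gcongr
    _ = M := by rw [← add_mul, hst, one_mul]

lemma mul_re_le_mul_re_add_abs_mul_norm_sub (c : ℝ) (z w : ℂ) :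
    c * z.re ≤ c * w.re + |c| * ‖w - z‖ := by
  have hre : |c * (w - z).re| ≤ |c| * ‖w - z‖ := by
    rw [abs_mul]
    gcongr
    exact abs_re_le_norm _
  have hsplit : c * z.re = c * w.re - c * (w - z).re := by
    rw [sub_re]
    ring
  linarith [neg_abs_le (c * (w - z).re)]

lemma re_ofReal_mul_ofReal_mul_le {x c R : ℝ} {z : ℂ} (hx : 0 ≤ x) (h : c * z.re ≤ R) :
    ((x : ℂ) * c * z).re ≤ x * R := by
  rw [mul_assoc, re_ofReal_mul, re_ofReal_mul]
  exact mul_le_mul_of_nonneg_left h hx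

end Complex

theorem stmt15_general (μ : ℕ) (α : ℝ) (hα : α ≠ 0) (ε A_R A_I K : ℝ)
    (hK : 0 < K)
    (φ ϖ : ℂ → ℂ)
    (h1 : ∀ τ ∈ Metric.ball (0 : ℂ) ε, ‖ϖ τ - φ τ‖ ≤ K * ‖τ‖ ^ (2 * μ + 1))
    (h2 : ∀ τ ∈ Metric.ball (0 : ℂ) ε,
      α * (ϖ τ).re + |α| * ‖ϖ τ - φ τ‖ ≤
        -τ.re + A_R * τ.re ^ (2 * μ) - A_I * τ.im ^ (2 * μ)) :
    ∃ C : ℝ, 0 < C ∧ ∀ n : ℕ, 1 ≤ n → ∀ x : ℝ, 0 ≤ x → x ≤ 2 * n →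
      ∀ τ ∈ Metric.ball (0 : ℂ) ε,
        ‖Complex.exp ((x : ℂ) * (α : ℂ) * ϖ τ) - Complex.exp ((x : ℂ) * (α : ℂ) * φ τ)‖ ≤
          C * n * ‖τ‖ ^ (2 * μ + 1) *
            Real.exp (x * (-τ.re + A_R * τ.re ^ (2 * μ) - A_I * τ.im ^ (2 * μ))) := by
  refine ⟨2 * |α| * K, by positivity, fun n _ x hx0 hxn τ hτ => ?_⟩
  set R := -τ.re + A_R * τ.re ^ (2 * μ) - A_I * τ.im ^ (2 * μ)
  have hϖ : α * (ϖ τ).re ≤ R := by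
    linarith [h2 τ hτ, mul_nonneg (abs_nonneg α) (norm_nonneg (ϖ τ - φ τ))]
  have hφ : α * (φ τ).re ≤ R :=
    (Complex.mul_re_le_mul_re_add_abs_mul_norm_sub α (φ τ) (ϖ τ)).trans (h2 τ hτ)
  have hdiff : ‖(x : ℂ) * α * ϖ τ - x * α * φ τ‖ ≤ 2 * n * |α| * (K * ‖τ‖ ^ (2 * μ + 1)) := by
    rw [← mul_sub, norm_mul, norm_mul, Complex.norm_real, Complex.norm_real, Real.norm_eq_abs,
      Real.norm_eq_abs, abs_of_nonneg hx0]
    gcongr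
    exact h1 τ hτ
  calc _ ≤ Real.exp (x * R) * ‖(x : ℂ) * α * ϖ τ - x * α * φ τ‖ :=
        Complex.norm_exp_sub_exp_le_of_re_le (Complex.re_ofReal_mul_ofReal_mul_le hx0 hϖ)
          (Complex.re_ofReal_mul_ofReal_mul_le hx0 hφ)
    _ ≤ Real.exp (x * R) * (2 * n * |α| * (K * ‖τ‖ ^ (2 * μ + 1))) := by gcongr
    _ = 2 * |α| * K * n * ‖τ‖ ^ (2 * μ + 1) * Real.exp (x * R) := by ring

theorem stmt15 (μ : ℕ) (hμ : 1 ≤ μ) (α : ℝ) (hα : α ≠ 0) (ε A_R A_I K : ℝ)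
    (hε : 0 < ε) (hAR : 0 < A_R) (hAI : 0 < A_I) (hK : 0 < K)
    (φ ϖ : ℂ → ℂ)
    (h1 : ∀ τ ∈ Metric.ball (0 : ℂ) ε, ‖ϖ τ - φ τ‖ ≤ K * ‖τ‖ ^ (2 * μ + 1))
    (h2 : ∀ τ ∈ Metric.ball (0 : ℂ) ε,
      α * (ϖ τ).re + |α| * ‖ϖ τ - φ τ‖ ≤
        -τ.re + A_R * τ.re ^ (2 * μ) - A_I * τ.im ^ (2 * μ)) :
    ∃ C : ℝ, 0 < C ∧ ∀ n : ℕ, 1 ≤ n → ∀ x : ℝ, 0 ≤ x → x ≤ 2 * n →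
      ∀ τ ∈ Metric.ball (0 : ℂ) ε,
        ‖Complex.exp ((x : ℂ) * (α : ℂ) * ϖ τ) - Complex.exp ((x : ℂ) * (α : ℂ) * φ τ)‖ ≤
          C * n * ‖τ‖ ^ (2 * μ + 1) *
            Real.exp (x * (-τ.re + A_R * τ.re ^ (2 * μ) - A_I * τ.im ^ (2 * μ))) :=
  stmt15_general μ α hα ε A_R A_I K hK φ ϖ h1 h2
end

section
/- In the setting of the context, let k ∈ ℕ. Then: (1) there exist C, c > 0 such that for every integer n ≥ 1 and every real x ∈ [0, n/2], ∫_{Γ_d(η)} |τ|^k exp( n Re(τ) + x (−Re(τ) + A_R Re(τ)^{2μ} − A_I Im(τ)^{2μ}) ) |dτ| ≤ C e^{−c n}; and (2) there exist C, c > 0 such that for every integer n ≥ 1 and every real x ≥ 2n, ∫_{Γ_in(η)} |τ|^k exp( n Re(τ) + x (−Re(τ) + A_R Re(τ)^{2μ} − A_I Im(τ)^{2μ}) ) |dτ| ≤ C e^{−c n}. -/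
/-! Each integral is at most (length of the side) × (sup of `|τ|^k`) × (sup of the exponential),
so only the exponent `n σ + x φ(σ, s)` at `τ = σ + i s` has to be bounded, where
`φ(σ, s) = -σ + A_R σ^{2μ} - A_I s^{2μ}`. On `Γ_d(η)` we have `σ = -η` and
`φ ≤ η + A_R η^{2μ} < 3η/2`, and for `x ≤ n/2` this cannot undo the factor `e^{-nη}`.
On `Γ_in(η)` we have `σ ≤ η` and `φ ≤ -(η - A_R η^{2μ})`: on the right side directly, on the
horizontal sides because `A_I r_ε(η)^{2μ} ≥ 2η`; for `x ≥ 2n` this beats `e^{nη}`. -/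

open MeasureTheory

/-- The integrand `|τ|^k exp( n Re(τ) + x (−Re(τ) + A_R Re(τ)^{2μ} − A_I Im(τ)^{2μ}) )`. -/
noncomputable def g16 (μ k : ℕ) (A_R A_I : ℝ) (n : ℕ) (x : ℝ) (τ : ℂ) : ℝ :=
  ‖τ‖ ^ k *
    Real.exp ((n : ℝ) * τ.re + x * (-τ.re + A_R * τ.re ^ (2 * μ) - A_I * τ.im ^ (2 * μ)))

def phase (μ : ℕ) (A_R A_I σ s : ℝ) : ℝ :=
  -σ + A_R * σ ^ (2 * μ) - A_I * s ^ (2 * μ)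

section Phase

variable {μ : ℕ} {A_R A_I : ℝ}

lemma phase_le_of_nonneg (hAI : 0 ≤ A_I) (σ s : ℝ) :
    phase μ A_R A_I σ s ≤ -σ + A_R * σ ^ (2 * μ) := by
  have := mul_nonneg hAI ((even_two_mul μ).pow_nonneg s)
  unfold phase
  linarith

lemma phase_le_of_abs_le (hAR : 0 ≤ A_R) {σ η : ℝ} (hσ : |σ| ≤ η) (s : ℝ) :
    phase μ A_R A_I σ s ≤ η + A_R * η ^ (2 * μ) - A_I * s ^ (2 * μ) := by
  have hpow : σ ^ (2 * μ) ≤ η ^ (2 * μ) := by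
    rw [← pow_abs_two_mul]
    exact pow_le_pow_left₀ (abs_nonneg σ) hσ _
  have := mul_le_mul_of_nonneg_left hpow hAR
  unfold phase
  linarith [neg_le_of_abs_le hσ]

end Phase

lemma mul_add_mul_le_of_le_half {n x σ φ M : ℝ} (hx0 : 0 ≤ x) (hxn : x ≤ n / 2) (hM : 0 ≤ M)
    (hφ : φ ≤ M) : n * σ + x * φ ≤ (σ + M / 2) * n := by
  nlinarith [mul_le_mul_of_nonneg_left hφ hx0, mul_le_mul_of_nonneg_right hxn hM]

lemma mul_add_mul_le_of_two_mul_le {n x σ σ₀ φ δ : ℝ} (hn : 0 ≤ n) (hx : 2 * n ≤ x)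
    (hδ : 0 ≤ δ) (hσ : σ ≤ σ₀) (hφ : φ ≤ -δ) : n * σ + x * φ ≤ -(2 * δ - σ₀) * n := by
  nlinarith [mul_le_mul_of_nonneg_left hφ (hn.trans (by linarith : n ≤ x)),
    mul_le_mul_of_nonneg_right hx hδ, mul_le_mul_of_nonneg_left hσ hn]

section Integral

variable {μ k : ℕ} {A_R A_I : ℝ} {n : ℕ} {x : ℝ}

lemma g16_eq (τ : ℂ) :
    g16 μ k A_R A_I n x τ =
      ‖τ‖ ^ k * Real.exp (n * τ.re + x * phase μ A_R A_I τ.re τ.im) := rfl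

lemma integral_g16_le {γ : ℝ → ℂ} {a b K E : ℝ} (hab : a ≤ b)
    (hK : ∀ t ∈ Set.Icc a b, |(γ t).re| + |(γ t).im| ≤ K)
    (hE : ∀ t ∈ Set.Icc a b, n * (γ t).re + x * phase μ A_R A_I (γ t).re (γ t).im ≤ E) :
    ∫ t in a..b, g16 μ k A_R A_I n x (γ t) ≤ (b - a) * (K ^ k * Real.exp E) := by
  have hpt : ∀ t ∈ Set.uIoc a b, ‖g16 μ k A_R A_I n x (γ t)‖ ≤ K ^ k * Real.exp E := by
    intro t ht
    rw [Set.uIoc_of_le hab] at ht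
    have ht := Set.Ioc_subset_Icc_self ht
    have hnorm : ‖γ t‖ ≤ K := (Complex.norm_le_abs_re_add_abs_im _).trans (hK t ht)
    rw [g16_eq, Real.norm_of_nonneg (by positivity)]
    exact mul_le_mul (pow_le_pow_left₀ (norm_nonneg _) hnorm k) (Real.exp_le_exp.2 (hE t ht))
      (Real.exp_pos _).le (pow_nonneg ((norm_nonneg _).trans hnorm) k)
  calc ∫ t in a..b, g16 μ k A_R A_I n x (γ t)
      ≤ ‖∫ t in a..b, g16 μ k A_R A_I n x (γ t)‖ := Real.le_norm_self _
    _ ≤ K ^ k * Real.exp E * |b - a| := intervalIntegral.norm_integral_le_of_norm_le_const hpt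
    _ = (b - a) * (K ^ k * Real.exp E) := by rw [abs_of_nonneg (sub_nonneg.2 hab)]; ring

lemma integral_g16_vertical_le {σ r E : ℝ} (hr : 0 ≤ r)
    (hE : ∀ t ∈ Set.Icc (-r) r, n * σ + x * phase μ A_R A_I σ t ≤ E) :
    ∫ t in (-r)..r, g16 μ k A_R A_I n x (σ + t * Complex.I) ≤
      2 * r * ((|σ| + r) ^ k * Real.exp E) := by
  have h := integral_g16_le (k := k) (γ := fun t : ℝ => σ + t * Complex.I) (K := |σ| + r)
    (neg_le_self hr) (fun t ht => by simpa using abs_le.2 ht) (fun t ht => by simpa using hE t ht)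
  linarith

lemma integral_g16_horizontal_le {η s E : ℝ} (hη : 0 ≤ η)
    (hE : ∀ t ∈ Set.Icc (-η) η, n * t + x * phase μ A_R A_I t s ≤ E) :
    ∫ t in (-η)..η, g16 μ k A_R A_I n x (t + s * Complex.I) ≤
      2 * η * ((η + |s|) ^ k * Real.exp E) := by
  have h := integral_g16_le (k := k) (γ := fun t : ℝ => t + s * Complex.I) (K := η + |s|)
    (neg_le_self hη) (fun t ht => by simpa using abs_le.2 ht) (fun t ht => by simpa using hE t ht)
  linarith

lemma integral_g16_left_side_le (hAI : 0 ≤ A_I) {η r : ℝ} (hη : 0 ≤ η) (hr : 0 ≤ r)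
    (hηpow : A_R * η ^ (2 * μ) < η / 2) (hx0 : 0 ≤ x) (hxn : x ≤ (n : ℝ) / 2) :
    ∫ t in (-r)..r, g16 μ k A_R A_I n x (-(η : ℂ) + t * Complex.I) ≤
      2 * r * (η + r) ^ k * Real.exp (-(η / 4) * n) := by
  have h := integral_g16_vertical_le (μ := μ) (k := k) (A_R := A_R) (A_I := A_I) (n := n) (x := x)
    (σ := -η) (E := -(η / 4) * n) hr fun t _ => by
      have hφ := phase_le_of_nonneg (μ := μ) (A_R := A_R) hAI (-η) t
      rw [Even.neg_pow (even_two_mul μ)] at hφ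
      have := mul_add_mul_le_of_le_half (σ := -η) hx0 hxn (by positivity : 0 ≤ 3 * η / 2)
        (hφ.trans (by linarith))
      linarith
  simpa [abs_of_nonneg hη, mul_assoc] using h

lemma integral_g16_inner_contour_le (hAR : 0 ≤ A_R) (hAI : 0 ≤ A_I) {η r : ℝ} (hη : 0 ≤ η)
    (hr : 0 ≤ r) (hηpow : A_R * η ^ (2 * μ) ≤ η) (hrpow : 2 * η ≤ A_I * r ^ (2 * μ))
    (hx : 2 * (n : ℝ) ≤ x) :
    (∫ t in (-η)..η, g16 μ k A_R A_I n x (t - r * Complex.I)) +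
      (∫ t in (-r)..r, g16 μ k A_R A_I n x (η + t * Complex.I)) +
      (∫ t in (-η)..η, g16 μ k A_R A_I n x (t + r * Complex.I)) ≤
      (4 * η + 2 * r) * (η + r) ^ k * Real.exp (-(η - 2 * A_R * η ^ (2 * μ)) * n) := by
  have hexp {σ φ : ℝ} (hσ : σ ≤ η) (hφ : φ ≤ -(η - A_R * η ^ (2 * μ))) :
      n * σ + x * φ ≤ -(η - 2 * A_R * η ^ (2 * μ)) * n :=
    (mul_add_mul_le_of_two_mul_le (Nat.cast_nonneg n) hx (by linarith) hσ hφ).trans_eq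
      (by ring)
  have hhorizontal (s : ℝ) (hs : |s| = r) :
      ∫ t in (-η)..η, g16 μ k A_R A_I n x (t + s * Complex.I) ≤
        2 * η * ((η + r) ^ k * Real.exp (-(η - 2 * A_R * η ^ (2 * μ)) * n)) := by
    rw [← hs]
    refine integral_g16_horizontal_le hη fun t ht => hexp ht.2 ?_
    refine (phase_le_of_abs_le hAR (abs_le.2 ht) s).trans ?_
    rw [← pow_abs_two_mul s, hs]
    linarith
  have hlower := hhorizontal (-r) (by rw [abs_neg, abs_of_nonneg hr])
  have hlower_point (t : ℝ) : (t : ℂ) + ((-r : ℝ) : ℂ) * Complex.I = t - r * Complex.I := by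
    push_cast; ring
  simp only [hlower_point] at hlower
  have hvertical := integral_g16_vertical_le (μ := μ) (k := k) (A_R := A_R) (A_I := A_I)
    (n := n) (x := x) (σ := η) (E := -(η - 2 * A_R * η ^ (2 * μ)) * n) hr fun t _ =>
      hexp le_rfl ((phase_le_of_nonneg hAI η t).trans_eq (by ring))
  rw [abs_of_nonneg hη] at hvertical
  linarith [hhorizontal r (abs_of_nonneg hr)]

end Integral

theorem stmt16_general (μ : ℕ) (A_R A_I : ℝ) (hAR : 0 < A_R) (hAI : 0 < A_I)
    (ε η : ℝ)
    (hη0 : 0 < η) (hηε : η < ε)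
    (hη1 : A_R * η ^ (2 * μ) < η / 2)
    (hη2 : η + A_R * η ^ (2 * μ) - A_I / 2 * Real.sqrt (ε ^ 2 - η ^ 2) ^ (2 * μ) < 0)
    (k : ℕ) :
    (∃ C c : ℝ, 0 < C ∧ 0 < c ∧ ∀ n : ℕ, 1 ≤ n → ∀ x : ℝ, 0 ≤ x → x ≤ (n : ℝ) / 2 →
      (∫ t in (-Real.sqrt (ε ^ 2 - η ^ 2))..(Real.sqrt (ε ^ 2 - η ^ 2)),
        g16 μ k A_R A_I n x (-(η : ℂ) + (t : ℂ) * Complex.I)) ≤ C * Real.exp (-c * n)) ∧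
    (∃ C c : ℝ, 0 < C ∧ 0 < c ∧ ∀ n : ℕ, 1 ≤ n → ∀ x : ℝ, 2 * (n : ℝ) ≤ x →
      (∫ t in (-η)..η,
        g16 μ k A_R A_I n x ((t : ℂ) - (Real.sqrt (ε ^ 2 - η ^ 2) : ℂ) * Complex.I)) +
      (∫ t in (-Real.sqrt (ε ^ 2 - η ^ 2))..(Real.sqrt (ε ^ 2 - η ^ 2)),
        g16 μ k A_R A_I n x ((η : ℂ) + (t : ℂ) * Complex.I)) +
      (∫ t in (-η)..η,
        g16 μ k A_R A_I n x ((t : ℂ) + (Real.sqrt (ε ^ 2 - η ^ 2) : ℂ) * Complex.I)) ≤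
        C * Real.exp (-c * n)) := by
  set r := Real.sqrt (ε ^ 2 - η ^ 2)
  have hr : 0 < r := Real.sqrt_pos.2 (by nlinarith)
  have hηpow : 0 < A_R * η ^ (2 * μ) := by positivity
  refine ⟨⟨2 * r * (η + r) ^ k, η / 4, by positivity, by positivity, fun n _ x hx0 hxn => ?_⟩,
    ⟨(4 * η + 2 * r) * (η + r) ^ k, η - 2 * A_R * η ^ (2 * μ), by positivity, by linarith,
      fun n _ x hx => ?_⟩⟩
  · exact integral_g16_left_side_le hAI.le hη0.le hr.le hη1 hx0 hxn
  · exact integral_g16_inner_contour_le hAR.le hAI.le hη0.le hr.le (by linarith) (by linarith)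
      hx

theorem stmt16 (μ : ℕ) (hμ : 1 ≤ μ) (A_R A_I : ℝ) (hAR : 0 < A_R) (hAI : 0 < A_I)
    (ε η : ℝ) (hε0 : 0 < ε)
    (hεsmall : ε < (1 / (2 * (μ : ℝ) * A_R)) ^ ((1 : ℝ) / (2 * (μ : ℝ) - 1)))
    (hη0 : 0 < η) (hηε : η < ε)
    (hη1 : A_R * η ^ (2 * μ) < η / 2)
    (hη2 : η + A_R * η ^ (2 * μ) - A_I / 2 * Real.sqrt (ε ^ 2 - η ^ 2) ^ (2 * μ) < 0)
    (k : ℕ) :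
    (∃ C c : ℝ, 0 < C ∧ 0 < c ∧ ∀ n : ℕ, 1 ≤ n → ∀ x : ℝ, 0 ≤ x → x ≤ (n : ℝ) / 2 →
      (∫ t in (-Real.sqrt (ε ^ 2 - η ^ 2))..(Real.sqrt (ε ^ 2 - η ^ 2)),
        g16 μ k A_R A_I n x (-(η : ℂ) + (t : ℂ) * Complex.I)) ≤ C * Real.exp (-c * n)) ∧
    (∃ C c : ℝ, 0 < C ∧ 0 < c ∧ ∀ n : ℕ, 1 ≤ n → ∀ x : ℝ, 2 * (n : ℝ) ≤ x →
      (∫ t in (-η)..η,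
        g16 μ k A_R A_I n x ((t : ℂ) - (Real.sqrt (ε ^ 2 - η ^ 2) : ℂ) * Complex.I)) +
      (∫ t in (-Real.sqrt (ε ^ 2 - η ^ 2))..(Real.sqrt (ε ^ 2 - η ^ 2)),
        g16 μ k A_R A_I n x ((η : ℂ) + (t : ℂ) * Complex.I)) +
      (∫ t in (-η)..η,
        g16 μ k A_R A_I n x ((t : ℂ) + (Real.sqrt (ε ^ 2 - η ^ 2) : ℂ) * Complex.I)) ≤
        C * Real.exp (-c * n)) :=
  stmt16_general μ A_R A_I hAR hAI ε η hη0 hηε hη1 hη2 k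
end
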